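/- arXiv:2111.08120 — 4 statements merged into one kernel-verified Lean document; each statement's English description precedes it below -/
import Mathlib

section
/- Let L0 and L1 be relational languages and, for each t < 2, let K_t be a class of finite L_t-structures closed under isomorphism. If K0 has the joint embedding property, K0 is indivisible, and K1 is indivisible, then the lexicographic product K0 ≀ K1 is indivisible. -/
/- Definitions following "Products of Classes of Finite Structures"
   (Guingona, Parnes, Scow). -/

open CategoryTheory FirstOrder FirstOrder.Language FirstOrder.Language.Structure

universe u v w w' u0 v0 u1 v1

namespace ProductsPaper

instance graphIsRelational : Language.graph.IsRelational :=
  fun _ => inferInstanceAs (IsEmpty Empty)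

/-- The induced structure on a subset, for a relational language. -/
instance setStructure (L : FirstOrder.Language.{u, v}) [L.IsRelational] {M : Type w}
    [L.Structure M] (s : Set M) : L.Structure s where
  funMap f _ := isEmptyElim f
  RelMap R x := RelMap R fun i => (x i : M)

/-- A class of structures: a set of bundled structures (with universes in `Type 0`). -/
abbrev StructClass (L : FirstOrder.Language.{u, v}) := Set (Bundled.{0} L.Structure)

variable {L : FirstOrder.Language.{u, v}}

/-- Every member of the class is finite. -/
def AllFinite (K : StructClass L) : Prop := ∀ A ∈ K, Finite A

/-- The class is closed under isomorphism. -/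
def IsoClosed (K : StructClass L) : Prop :=
  ∀ A ∈ K, ∀ B : Bundled.{0} L.Structure, Nonempty (A ≃[L] B) → B ∈ K

/-- The class `K` is indivisible: for every `A ∈ K` and `k ≥ 2` there is `B ∈ K` such that
every `k`-coloring of `B` admits a monochromatic embedded copy of `A`. -/
def Indivisible (K : StructClass L) : Prop :=
  ∀ A ∈ K, ∀ k : ℕ, 2 ≤ k → ∃ B ∈ K, ∀ c : B → Fin k,
    ∃ f : A ↪[L] B, ∃ i : Fin k, ∀ a : A, c (f a) = i

/-- The joint embedding property. -/
def JEP (K : StructClass L) : Prop :=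
  ∀ A ∈ K, ∀ B ∈ K, ∃ C ∈ K, Nonempty (A ↪[L] C) ∧ Nonempty (B ↪[L] C)

/-- The amalgamation property. -/
def AP (K : StructClass L) : Prop :=
  ∀ (A B₀ B₁ : Bundled.{0} L.Structure), A ∈ K → B₀ ∈ K → B₁ ∈ K →
    ∀ (f₀ : A ↪[L] B₀) (f₁ : A ↪[L] B₁),
      ∃ C ∈ K, ∃ (g₀ : B₀ ↪[L] C) (g₁ : B₁ ↪[L] C), g₀.comp f₀ = g₁.comp f₁

/-- The strong (disjoint) amalgamation property. -/
def SAP (K : StructClass L) : Prop :=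
  ∀ (A B₀ B₁ : Bundled.{0} L.Structure), A ∈ K → B₀ ∈ K → B₁ ∈ K →
    ∀ (f₀ : A ↪[L] B₀) (f₁ : A ↪[L] B₁),
      ∃ C ∈ K, ∃ (g₀ : B₀ ↪[L] C) (g₁ : B₁ ↪[L] C), g₀.comp f₀ = g₁.comp f₁ ∧
        Set.range g₀ ∩ Set.range g₁ = Set.range (g₀.comp f₀)

/-- The hereditary property: every substructure (equivalently, subset, since the language is
relational) of a member of the class is a member of the class. -/
def HereditaryC [L.IsRelational] (K : StructClass L) : Prop :=
  ∀ A ∈ K, ∀ s : Set A, (⟨s, setStructure L s⟩ : Bundled.{0} L.Structure) ∈ K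

/-- The age of a structure: the class of all finite structures embeddable in it. -/
def ageC (L : FirstOrder.Language.{u, v}) (M : Type w) [L.Structure M] : StructClass L :=
  {A | Finite A ∧ Nonempty (A ↪[L] M)}

/-- The proper subsets of `{0, …, n-1}`, indexing a disjoint amalgamation problem. -/
abbrev ProperSub (n : ℕ) := {p : Finset (Fin n) // p ≠ Finset.univ}

lemma inter_ne_univ {n : ℕ} (p q : ProperSub n) : p.1 ∩ q.1 ≠ Finset.univ := by
  intro h
  apply p.2
  apply Finset.eq_univ_of_forall
  intro x
  have hx : x ∈ p.1 ∩ q.1 := by rw [h]; exact Finset.mem_univ x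
  exact (Finset.mem_inter.mp hx).1

/-- The intersection of two proper subsets of `Fin n`, as a proper subset. -/
def interP {n : ℕ} (p q : ProperSub n) : ProperSub n := ⟨p.1 ∩ q.1, inter_ne_univ p q⟩

/-- The disjoint `n`-amalgamation property: every disjoint amalgamation system indexed by the
proper subsets of `{0, …, n-1}` extends to a disjoint amalgamation system indexed by all
subsets of `{0, …, n-1}`, i.e., it admits a top structure `C ∈ K` together with embeddings
commuting with the given system and satisfying the disjointness condition. -/
def DisjointNAmalg (K : StructClass L) (n : ℕ) : Prop :=
  ∀ (A : ProperSub n → Bundled.{0} L.Structure)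
    (f : ∀ p q : ProperSub n, p.1 ⊆ q.1 → (A p ↪[L] A q)),
    (∀ p, A p ∈ K) →
    (∀ (p : ProperSub n) (h : p.1 ⊆ p.1), f p p h = Embedding.refl L (A p)) →
    (∀ (p q r : ProperSub n) (hpq : p.1 ⊆ q.1) (hqr : q.1 ⊆ r.1),
      f p r (hpq.trans hqr) = (f q r hqr).comp (f p q hpq)) →
    (∀ (p q r : ProperSub n) (hpr : p.1 ⊆ r.1) (hqr : q.1 ⊆ r.1),
      Set.range (f p r hpr) ∩ Set.range (f q r hqr)
        = Set.range (f (interP p q) r (Finset.inter_subset_left.trans hpr))) →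
    ∃ C ∈ K, ∃ g : ∀ p : ProperSub n, A p ↪[L] C,
      (∀ (p q : ProperSub n) (hpq : p.1 ⊆ q.1), (g q).comp (f p q hpq) = g p) ∧
      (∀ p q : ProperSub n,
        Set.range (g p) ∩ Set.range (g q) = Set.range (g (interP p q)))

section DSS

variable (L) [L.IsRelational]

/-- `qfClassSet L C0 c` is the set of elements `c'` such that the map fixing `C0`
pointwise and sending `c` to `c'` is an isomorphism from `C0 ∪ {c}` onto `C0 ∪ {c'}`. -/
def qfClassSet {C : Type w} [L.Structure C] (C0 : Set C) (c : C) : Set C :=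
  {c' | c' ∉ C0 ∧ ∀ ⦃m : ℕ⦄ (R : L.Relations m) (x x' : Fin m → C),
    (∀ i, (x i = c ∧ x' i = c') ∨ (x i ∈ C0 ∧ x' i = x i)) →
    (RelMap R x ↔ RelMap R x')}

/-- A class of structures is definably self-similar. -/
def DefinablySelfSimilar (K : StructClass L) : Prop :=
  ∀ A B C : Bundled.{0} L.Structure, A ∈ K → B ∈ K → C ∈ K →
    ∀ (f : A ↪[L] B) (C0 : Set C) (c : C), c ∉ C0 →
    ∀ g : A ↪[L] (qfClassSet L C0 c), ∃ D ∈ K, ∃ (j : C ↪[L] D)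
      (h : B ↪[L] (qfClassSet L (⇑j '' C0) (j c))),
      ∀ a : A, (h (f a) : D) = j (g a : C)

end DSS

/-- The class `K` has exactly one singleton structure up to isomorphism. -/
def UniqueSingleton (K : StructClass L) : Prop :=
  (∃ A ∈ K, Nonempty A ∧ Subsingleton A) ∧
  (∀ A B : Bundled.{0} L.Structure, A ∈ K → B ∈ K →
    Nonempty A → Subsingleton A → Nonempty B → Subsingleton B → Nonempty (A ≃[L] B))

/-- Ultrahomogeneity: every embedding of a finite substructure extends to an automorphism. -/
def Ultrahomogeneous (L : FirstOrder.Language.{u, v}) [L.IsRelational] (M : Type w)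
    [L.Structure M] : Prop :=
  ∀ s : Set M, s.Finite → ∀ f : s ↪[L] M, ∃ g : M ≃[L] M, ∀ x : s, g x = f x

/-- The class has countably many structures up to isomorphism. -/
def EssentiallyCountable (K : StructClass L) : Prop :=
  ∃ S : StructClass L, S.Countable ∧ ∀ A ∈ K, ∃ B ∈ S, Nonempty (A ≃[L] B)

/-- A Fraïssé class: nonempty, countably many members up to isomorphism, hereditary,
with the joint embedding and amalgamation properties. -/
def FraisseClass [L.IsRelational] (K : StructClass L) : Prop :=
  K.Nonempty ∧ EssentiallyCountable K ∧ HereditaryC K ∧ JEP K ∧ AP K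

/-- `M` is a Fraïssé limit of the class `K`: countable, ultrahomogeneous, with age `K`. -/
def IsFraisseLimitC [L.IsRelational] (K : StructClass L) (M : Type w) [L.Structure M] : Prop :=
  Countable M ∧ Ultrahomogeneous L M ∧ ageC L M = K

variable {L0 : FirstOrder.Language.{u0, v0}} {L1 : FirstOrder.Language.{u1, v1}}

/-- The language of the lexicographic product: the disjoint union of the two languages plus a
new binary relation symbol `E` (the unique relation symbol of `Language.graph`). -/
def lexLang (L0 : FirstOrder.Language.{u0, v0}) (L1 : FirstOrder.Language.{u1, v1}) :
    FirstOrder.Language :=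
  (L0.sum L1).sum Language.graph

/-- The language of the full product: the disjoint union of the two languages plus two
new binary relation symbols `E0` and `E1`. -/
def fullLang (L0 : FirstOrder.Language.{u0, v0}) (L1 : FirstOrder.Language.{u1, v1}) :
    FirstOrder.Language :=
  (L0.sum L1).sum (Language.graph.sum Language.graph)


instance lexLangIsRelational [L0.IsRelational] [L1.IsRelational] :
    (lexLang L0 L1).IsRelational :=
  inferInstanceAs (((L0.sum L1).sum Language.graph).IsRelational)

instance fullLangIsRelational [L0.IsRelational] [L1.IsRelational] :
    (fullLang L0 L1).IsRelational :=
  inferInstanceAs (((L0.sum L1).sum (Language.graph.sum Language.graph)).IsRelational)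

section Products

variable [L0.IsRelational] [L1.IsRelational]

/-- Interpretation of `L0` on a lexicographic product. -/
def lexStr0 {B : Type w} (A : B → Type w') [∀ b, L0.Structure (A b)] :
    L0.Structure (Σ b, A b) where
  funMap f _ := isEmptyElim f
  RelMap {n} R x := ∃ (b : B) (a : Fin n → A b), (∀ i, x i = ⟨b, a i⟩) ∧ RelMap R a

/-- Interpretation of `L1` on a lexicographic product. -/
def lexStr1 {B : Type w} [L1.Structure B] (A : B → Type w') :
    L1.Structure (Σ b, A b) where
  funMap f _ := isEmptyElim f
  RelMap R x := RelMap R fun i => (x i).1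

/-- Interpretation of the extra binary relation `E` on a lexicographic product. -/
def lexStrE {B : Type w} (A : B → Type w') : Language.graph.Structure (Σ b, A b) where
  funMap f _ := isEmptyElim f
  RelMap {n} R := match n, R with
    | _, .adj => fun x => (x 0).1 = (x 1).1

/-- The lexicographic product of the structures `A b` along `B`. -/
def lexStr {B : Type w} [L1.Structure B] (A : B → Type w') [∀ b, L0.Structure (A b)] :
    (lexLang L0 L1).Structure (Σ b, A b) :=
  @Language.sumStructure _ _ _
    (@Language.sumStructure _ _ _ (lexStr0 A) (lexStr1 A)) (lexStrE A)

/-- The lexicographic product `A ≀ B` of two structures (as a type). -/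
def lexProd (L0 : FirstOrder.Language.{u0, v0}) (L1 : FirstOrder.Language.{u1, v1})
    (A : Type w) (B : Type w') : Type max w w' :=
  Σ _ : B, A

instance lexProdStr (A : Type w) (B : Type w') [L0.Structure A] [L1.Structure B] :
    (lexLang L0 L1).Structure (lexProd L0 L1 A B) :=
  lexStr fun _ : B => A

/-- The lexicographic product of a family of bundled structures along a bundled structure. -/
def lexBundle (B : Bundled.{0} L1.Structure) (A : B → Bundled.{0} L0.Structure) :
    Bundled.{0} (lexLang L0 L1).Structure :=
  ⟨Σ b : B, A b, lexStr fun b => (A b : Type)⟩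

/-- The lexicographic product of two classes of structures. -/
def lexClass (K0 : StructClass L0) (K1 : StructClass L1) : StructClass (lexLang L0 L1) :=
  {C | ∃ B ∈ K1, ∃ A : B → Bundled.{0} L0.Structure, (∀ b, A b ∈ K0) ∧
    Nonempty (C ≃[lexLang L0 L1] lexBundle B A)}

/-- Interpretation of `L0` on a full product. -/
def fullStr0 (A : Type w) (B : Type w') [L0.Structure A] : L0.Structure (A × B) where
  funMap f _ := isEmptyElim f
  RelMap R x := RelMap R fun i => (x i).1

/-- Interpretation of `L1` on a full product. -/
def fullStr1 (A : Type w) (B : Type w') [L1.Structure B] : L1.Structure (A × B) where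
  funMap f _ := isEmptyElim f
  RelMap R x := RelMap R fun i => (x i).2

/-- Interpretation of `E0` on a full product. -/
def fullStrE0 (A : Type w) (B : Type w') : Language.graph.Structure (A × B) where
  funMap f _ := isEmptyElim f
  RelMap {n} R := match n, R with
    | _, .adj => fun x => (x 0).1 = (x 1).1

/-- Interpretation of `E1` on a full product. -/
def fullStrE1 (A : Type w) (B : Type w') : Language.graph.Structure (A × B) where
  funMap f _ := isEmptyElim f
  RelMap {n} R := match n, R with
    | _, .adj => fun x => (x 0).2 = (x 1).2

/-- The full product `A ⊠ B` of two structures, as a structure on `A × B`. -/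
def fullStr (A : Type w) (B : Type w') [L0.Structure A] [L1.Structure B] :
    (fullLang L0 L1).Structure (A × B) :=
  @Language.sumStructure _ _ _
    (@Language.sumStructure _ _ _ (fullStr0 A B) (fullStr1 A B))
    (@Language.sumStructure _ _ _ (fullStrE0 A B) (fullStrE1 A B))

/-- The full product `A ⊠ B` of two structures (as a type). -/
def fullProd (L0 : FirstOrder.Language.{u0, v0}) (L1 : FirstOrder.Language.{u1, v1})
    (A : Type w) (B : Type w') : Type max w w' :=
  A × B

instance fullProdStr (A : Type w) (B : Type w') [L0.Structure A] [L1.Structure B] :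
    (fullLang L0 L1).Structure (fullProd L0 L1 A B) :=
  fullStr A B

/-- The full product of two bundled structures. -/
def fullBundle (A : Bundled.{0} L0.Structure) (B : Bundled.{0} L1.Structure) :
    Bundled.{0} (fullLang L0 L1).Structure :=
  ⟨A × B, fullStr A B⟩

/-- The full product of two classes of structures. -/
def fullClass (K0 : StructClass L0) (K1 : StructClass L1) : StructClass (fullLang L0 L1) :=
  {C | Finite C ∧ ∃ A ∈ K0, ∃ B ∈ K1, Nonempty (C ↪[fullLang L0 L1] fullBundle A B)}

end Products

/-- The free superposition of two classes of structures: all finite structures in the disjoint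
union language whose reducts to the two languages lie in the respective classes. -/
def freeClass (K0 : StructClass L0) (K1 : StructClass L1) : StructClass (L0.sum L1) :=
  {C | Finite C ∧
    (⟨C, (LHom.sumInl (L := L0) (L' := L1)).reduct C⟩ : Bundled.{0} L0.Structure) ∈ K0 ∧
    (⟨C, (LHom.sumInr (L := L0) (L' := L1)).reduct C⟩ : Bundled.{0} L1.Structure) ∈ K1}

/-- A configuration of the class `K` into `M^n`: an interpretation of the relation symbols of
`L0` as `L`-formulas with parameters from `M`, together with maps `f_A : A → M^n` for `A ∈ K`,
such that each relation of each `A ∈ K` is defined by the corresponding formula. -/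
structure Config (L0 : FirstOrder.Language.{u0, v0}) (K : StructClass L0)
    (L : FirstOrder.Language.{u, v}) (M : Type w) [L.Structure M] (n : ℕ) where
  I : ∀ {m : ℕ}, L0.Relations m → L.Formula ((Fin m × Fin n) ⊕ M)
  f : ∀ (A : Bundled.{0} L0.Structure), A ∈ K → A → Fin n → M
  compat : ∀ (A : Bundled.{0} L0.Structure) (hA : A ∈ K) {m : ℕ} (R : L0.Relations m)
      (a : Fin m → A),
    RelMap R a ↔ (I R).Realize (Sum.elim (fun p => f A hA (a p.1) p.2) id)

/-- A configuration is injective if all the maps `f_A` are injective. -/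
def Config.Injective {K : StructClass L0} {L : FirstOrder.Language.{u, v}} {M : Type w}
    [L.Structure M] {n : ℕ} (c : Config L0 K L M n) : Prop :=
  ∀ (A : Bundled.{0} L0.Structure) (hA : A ∈ K), Function.Injective (c.f A hA)

/-- A complete theory `T` admits a `K`-configuration if some model of `T` admits a
`K`-configuration into some finite power. -/
def AdmitsConfig (K : StructClass L0) {L : FirstOrder.Language.{u, v}} (T : L.Theory) : Prop :=
  ∃ (M : Type max u v) (_ : L.Structure M), M ⊨ T ∧ ∃ n : ℕ, Nonempty (Config L0 K L M n)

/-- `T` has an infinite model. -/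
def HasInfiniteModel {L : FirstOrder.Language.{u, v}} (T : L.Theory) : Prop :=
  ∃ (M : Type max u v) (_ : L.Structure M), M ⊨ T ∧ Infinite M

/-- The binary relation of a `Language.graph`-structure. -/
def rel2 {M : Type w} [Language.graph.Structure M] (x y : M) : Prop :=
  RelMap Language.adj ![x, y]

/-- The class of all finite strict partial orders. -/
def POClass : StructClass Language.graph :=
  {A | Finite A ∧ (∀ x : A, ¬ rel2 x x) ∧ ∀ x y z : A, rel2 x y → rel2 y z → rel2 x z}

/-- The class of all finite tournaments. -/
def TournClass : StructClass Language.graph :=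
  {A | Finite A ∧ (∀ x : A, ¬ rel2 x x) ∧ ∀ x y : A, x ≠ y → Xor' (rel2 x y) (rel2 y x)}

/-- The class of all finite directed graphs. -/
def DGClass : StructClass Language.graph :=
  {A | Finite A ∧ ∀ x : A, ¬ rel2 x x}

/-- The class of all finite (simple) graphs. -/
def GClass : StructClass Language.graph :=
  {A | Finite A ∧ (∀ x : A, ¬ rel2 x x) ∧ ∀ x y : A, rel2 x y → rel2 y x}

/-! Write `A ≅ ⨆_{b ∈ B} A_b`. By the joint embedding property all fibres `A_b` embed into one
`A* ∈ K₀`. Take `A' ∈ K₀` witnessing indivisibility of `K₀` for `A*` and `B' ∈ K₁` witnessing it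
for `B`, and let `C := ⨆_{b' ∈ B'} A'`. Given a colouring of `C`, each fibre `{b'} × A'` contains
a monochromatic copy of `A*`; colouring `b'` by that colour gives a monochromatic copy of `B`
in `B'`, and combining the two yields a monochromatic copy of `A` in `C`. -/

lemma JEP.exists_forall_embedding {L : FirstOrder.Language.{u, v}} {K : StructClass L}
    (hjep : JEP K) {ι : Type*} [Finite ι] [Nonempty ι] (A : ι → Bundled.{0} L.Structure)
    (hA : ∀ i, A i ∈ K) : ∃ C ∈ K, ∀ i, Nonempty (A i ↪[L] C) := by
  have := Fintype.ofFinite ι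
  suffices H : ∀ s : Finset ι, s.Nonempty → ∃ C ∈ K, ∀ i ∈ s, Nonempty (A i ↪[L] C) by
    obtain ⟨C, hC, h⟩ := H Finset.univ Finset.univ_nonempty
    exact ⟨C, hC, fun i => h i (Finset.mem_univ i)⟩
  intro s hs
  induction hs using Finset.Nonempty.cons_induction with
  | singleton a =>
    refine ⟨A a, hA a, fun i hi => ?_⟩
    rw [Finset.mem_singleton.mp hi]
    exact ⟨Embedding.refl L _⟩
  | cons a s _ _ ih =>
    obtain ⟨C, hC, hsC⟩ := ih
    obtain ⟨D, hD, ⟨f⟩, ⟨g⟩⟩ := hjep (A a) (hA a) C hC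
    refine ⟨D, hD, fun i hi => ?_⟩
    rcases Finset.mem_cons.mp hi with rfl | hi
    · exact ⟨f⟩
    · obtain ⟨e⟩ := hsC i hi
      exact ⟨g.comp e⟩

lemma exists_eq_sigma_mk_of_fst_eq {ι β : Type*} {A : β → Type*} {x : ι → Σ b, A b} {b : β}
    (hx : ∀ i, (x i).1 = b) : ∃ a : ι → A b, x = fun i => ⟨b, a i⟩ := by
  have hmk : ∀ i, ∃ y : A b, x i = ⟨b, y⟩ := by
    intro i
    have hxi := hx i
    revert hxi
    generalize x i = p
    rintro rfl
    exact ⟨p.2, rfl⟩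
  choose a ha using hmk
  exact ⟨a, funext ha⟩

section LexEmbedding

variable {L0 : FirstOrder.Language.{u0, v0}} {L1 : FirstOrder.Language.{u1, v1}}
variable [L0.IsRelational] [L1.IsRelational]

def lexEmbedding {B B' : Type w} [L1.Structure B] [L1.Structure B'] [Nonempty B]
    (A : B → Type w') (A' : Type w') [∀ b, L0.Structure (A b)] [L0.Structure A']
    (h : B ↪[L1] B') (g : ∀ b, A b ↪[L0] A') :
    @Embedding (lexLang L0 L1) (Σ b, A b) (Σ _ : B', A') (lexStr A) (lexStr fun _ => A') := by
  letI : (lexLang L0 L1).Structure (Σ b, A b) := lexStr A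
  letI : (lexLang L0 L1).Structure (Σ _ : B', A') := lexStr fun _ => A'
  refine ⟨⟨fun p => ⟨h p.1, g p.1 p.2⟩, ?_⟩, fun f => isEmptyElim f, ?_⟩
  · rintro ⟨b₁, a₁⟩ ⟨b₂, a₂⟩ hp
    obtain rfl : b₁ = b₂ := h.injective (congrArg Sigma.fst hp)
    obtain rfl : a₁ = a₂ := (g b₁).injective (congrArg Sigma.snd hp)
    rfl
  · intro n r x
    obtain (R | R) | R := r
    · show (∃ (b' : B') (a' : Fin n → A'),
          (∀ i, (⟨h (x i).1, g (x i).1 (x i).2⟩ : Σ _ : B', A') = ⟨b', a' i⟩) ∧ RelMap R a')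
        ↔ ∃ (b : B) (a : Fin n → A b), (∀ i, x i = ⟨b, a i⟩) ∧ RelMap R a
      constructor
      · rintro ⟨b', a', hxa', hR⟩
        -- for `n = 0` no coordinate determines the fibre, so any `b : B` serves
        obtain ⟨b, hb⟩ : ∃ b, ∀ i, (x i).1 = b := by
          rcases isEmpty_or_nonempty (Fin n) with hn | ⟨⟨i₀⟩⟩
          · exact ⟨Classical.arbitrary B, isEmptyElim⟩
          · exact ⟨(x i₀).1, fun i => h.injective
              ((congrArg Sigma.fst (hxa' i)).trans (congrArg Sigma.fst (hxa' i₀)).symm)⟩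
        obtain ⟨a, rfl⟩ := exists_eq_sigma_mk_of_fst_eq hb
        refine ⟨b, a, fun _ => rfl, ((g b).map_rel R a).mp ?_⟩
        convert hR using 1
        exact funext fun i => congrArg Sigma.snd (hxa' i)
      · rintro ⟨b, a, hxa, hR⟩
        refine ⟨h b, fun i => g b (a i), fun i => by rw [hxa i], ((g b).map_rel R a).mpr hR⟩
    · exact h.map_rel R fun i => (x i).1
    · cases R
      exact h.injective.eq_iff

end LexEmbedding

theorem stmt0_general (L0 : FirstOrder.Language.{u0, v0}) (L1 : FirstOrder.Language.{u1, v1})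
    [L0.IsRelational] [L1.IsRelational]
    (K0 : StructClass L0) (K1 : StructClass L1)
    (hfin1 : AllFinite K1)
    (hjep : JEP K0) (hind0 : Indivisible K0) (hind1 : Indivisible K1) :
    Indivisible (lexClass K0 K1) := by
  intro A ⟨B, hB, Af, hAf, ⟨e⟩⟩ k hk
  rcases isEmpty_or_nonempty B with hB_empty | hB_nonempty
  · have : IsEmpty A := ⟨fun a => isEmptyElim (e a).1⟩
    exact ⟨A, ⟨B, hB, Af, hAf, ⟨e⟩⟩, fun _ => ⟨Embedding.refl _ _, ⟨0, by omega⟩, isEmptyElim⟩⟩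
  have := hfin1 B hB
  obtain ⟨Astar, hAstar, hAf_emb⟩ := hjep.exists_forall_embedding Af hAf
  obtain ⟨A', hA', hA'_ind⟩ := hind0 Astar hAstar k hk
  obtain ⟨B', hB', hB'_ind⟩ := hind1 B hB k hk
  refine ⟨lexBundle B' fun _ => A',
    ⟨B', hB', fun _ => A', fun _ => hA', ⟨Language.Equiv.refl (lexLang L0 L1) _⟩⟩, fun c => ?_⟩
  choose fibreEmb fibreColour hfibre using fun b' : B' => hA'_ind fun a => c ⟨b', a⟩
  obtain ⟨h, j, hj⟩ := hB'_ind fibreColour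
  let F := lexEmbedding (fun b => Af b) A' h
    fun b => (fibreEmb (h b)).comp (Classical.choice (hAf_emb b))
  refine ⟨Embedding.comp (N := lexBundle B Af) F e.toEmbedding, j, fun a => ?_⟩
  exact (hfibre _ _).trans (hj _)

/-- lexicographic products preserve indivisibility. -/
theorem stmt0 (L0 : FirstOrder.Language.{u0, v0}) (L1 : FirstOrder.Language.{u1, v1})
    [L0.IsRelational] [L1.IsRelational]
    (K0 : StructClass L0) (K1 : StructClass L1)
    (hfin0 : AllFinite K0) (hiso0 : IsoClosed K0)
    (hfin1 : AllFinite K1) (hiso1 : IsoClosed K1)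
    (hjep : JEP K0) (hind0 : Indivisible K0) (hind1 : Indivisible K1) :
    Indivisible (lexClass K0 K1) :=
  stmt0_general L0 L1 K0 K1 hfin1 hjep hind0 hind1

end ProductsPaper
end

section
/- Let L0 and L1 be relational languages and, for each t < 2, let K_t be a class of finite L_t-structures closed under isomorphism. If K0 and K1 are indivisible, then the full product K0 ⊠ K1 is indivisible. -/
/- Definitions following "Products of Classes of Finite Structures"
   (Guingona, Parnes, Scow). -/

open CategoryTheory FirstOrder FirstOrder.Language FirstOrder.Language.Structure

universe u v w w' u0 v0 u1 v1

namespace ProductsPaper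

variable {L : FirstOrder.Language.{u, v}}

variable {L0 : FirstOrder.Language.{u0, v0}} {L1 : FirstOrder.Language.{u1, v1}}

/-! Colour each `b ∈ B'` by its column `a ↦ c (a, b)`, a colouring of `B'` with `k ^ |A'|`
colours. Indivisibility of `K1` yields a copy of `B` on which all columns agree, and
indivisibility of `K0`, applied to that common column, yields a copy of `A` on which it is
constant; the product of the two embeddings is a monochromatic copy of `A ⊠ B`. -/

section FullProduct

variable [L0.IsRelational] [L1.IsRelational]

def fullBundleMap {A A' : Bundled.{0} L0.Structure} {B B' : Bundled.{0} L1.Structure}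
    (f : A ↪[L0] A') (g : B ↪[L1] B') :
    fullBundle A B ↪[fullLang L0 L1] fullBundle A' B' where
  toFun p := (f p.1, g p.2)
  inj' _ _ h := Prod.ext (f.injective (congrArg Prod.fst h)) (g.injective (congrArg Prod.snd h))
  map_fun' F := isEmptyElim F
  map_rel' := by
    rintro n ((R | R) | R | R) x
    · exact f.map_rel R fun i => (x i).1
    · exact g.map_rel R fun i => (x i).2
    · cases R
      exact f.injective.eq_iff
    · cases R
      exact g.injective.eq_iff

lemma fullBundle_mem_fullClass {K0 : StructClass L0} {K1 : StructClass L1}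
    (hfin0 : AllFinite K0) (hfin1 : AllFinite K1)
    {A : Bundled.{0} L0.Structure} {B : Bundled.{0} L1.Structure}
    (hA : A ∈ K0) (hB : B ∈ K1) : fullBundle A B ∈ fullClass K0 K1 :=
  have := hfin0 A hA
  have := hfin1 B hB
  ⟨Finite.instProd, A, hA, B, hB, ⟨Embedding.refl _ _⟩⟩

end FullProduct

lemma Indivisible.exists_monochromatic {K : StructClass L}
    (hK : Indivisible K) {A : Bundled.{0} L.Structure} (hA : A ∈ K)
    (ι : Type*) [Finite ι] [Nonempty ι] :
    ∃ B ∈ K, ∀ c : B → ι, ∃ f : A ↪[L] B, ∃ i, ∀ a, c (f a) = i := by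
  obtain ⟨B, hB, hBmono⟩ := hK A hA (max (Nat.card ι) 2) (le_max_right _ _)
  refine ⟨B, hB, fun c => ?_⟩
  let j : ι → Fin (max (Nat.card ι) 2) := Fin.castLE (le_max_left _ _) ∘ Finite.equivFin ι
  have hj : j.Injective := (Fin.castLE_injective _).comp (Finite.equivFin ι).injective
  obtain ⟨f, n, hf⟩ := hBmono (j ∘ c)
  by_cases hn : ∃ i, j i = n
  · obtain ⟨i, rfl⟩ := hn
    exact ⟨f, i, fun a => hj (hf a)⟩
  · -- the copy of `A` is empty, as any of its points would have colour `n`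
    exact ⟨f, Classical.arbitrary ι, fun a => (hn ⟨c (f a), hf a⟩).elim⟩

theorem stmt1_general (L0 : FirstOrder.Language.{u0, v0}) (L1 : FirstOrder.Language.{u1, v1})
    [L0.IsRelational] [L1.IsRelational]
    (K0 : StructClass L0) (K1 : StructClass L1)
    (hfin0 : AllFinite K0)
    (hfin1 : AllFinite K1)
    (hind0 : Indivisible K0) (hind1 : Indivisible K1) :
    Indivisible (fullClass K0 K1) := by
  rintro C ⟨-, A, hA, B, hB, ⟨e⟩⟩ k hk
  obtain ⟨A', hA', hA'mono⟩ := hind0 A hA k hk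
  have : Finite A' := hfin0 A' hA'
  have : NeZero k := ⟨by omega⟩
  obtain ⟨B', hB', hB'mono⟩ := hind1.exists_monochromatic hB (A' → Fin k)
  refine ⟨fullBundle A' B', fullBundle_mem_fullClass hfin0 hfin1 hA' hB', fun c => ?_⟩
  obtain ⟨g, column, hg⟩ := hB'mono fun b a => c (a, b)
  obtain ⟨f, i, hf⟩ := hA'mono column
  refine ⟨(fullBundleMap f g).comp e, i, fun x => ?_⟩
  calc c (f (e x).1, g (e x).2) = column (f (e x).1) := congrFun (hg (e x).2) _
    _ = i := hf _

/-- full products preserve indivisibility. -/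
theorem stmt1 (L0 : FirstOrder.Language.{u0, v0}) (L1 : FirstOrder.Language.{u1, v1})
    [L0.IsRelational] [L1.IsRelational]
    (K0 : StructClass L0) (K1 : StructClass L1)
    (hfin0 : AllFinite K0) (hiso0 : IsoClosed K0)
    (hfin1 : AllFinite K1) (hiso1 : IsoClosed K1)
    (hind0 : Indivisible K0) (hind1 : Indivisible K1) :
    Indivisible (fullClass K0 K1) :=
  stmt1_general L0 L1 K0 K1 hfin0 hfin1 hind0 hind1

end ProductsPaper
end

section
/- Let L0 and L1 be relational languages and, for each t < 2, let K_t be a class of finite L_t-structures closed under isomorphism with the hereditary property. For all n ≥ 2, if K0 and K1 have the disjoint n-amalgamation property, then the free superposition K0 * K1 has the disjoint n-amalgamation property. -/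
/- Definitions following "Products of Classes of Finite Structures"
   (Guingona, Parnes, Scow). -/

open CategoryTheory FirstOrder FirstOrder.Language FirstOrder.Language.Structure

universe u v w w' u0 v0 u1 v1

namespace ProductsPaper

variable {L : FirstOrder.Language.{u, v}}

variable {L0 : FirstOrder.Language.{u0, v0}} {L1 : FirstOrder.Language.{u1, v1}}

/-!
Amalgamate the `L0`-reducts in `K0` and the `L1`-reducts in `K1`, obtaining disjoint amalgams
`g0 : A p → C0` and `g1 : A p → C1`. By disjointness, `g0 p a = g0 q b` holds exactly when `a`
and `b` come from a common element of `A (p ∩ q)`; this condition does not mention `C0`, so `g0`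
and `g1` identify the same pairs. Hence the union `Z ⊆ C0 × C1` of the images of the pairings
`a ↦ (g0 p a, g1 p a)` projects injectively to both factors: its `L0`- and `L1`-reducts embed
into `C0` and `C1`, so lie in `K0` and `K1` by heredity, and `Z` is the required amalgam.
-/

section Cocone

variable {n : ℕ} {α : ProperSub n → Type*} {C D : Type*}
  (f : ∀ p q : ProperSub n, p.1 ⊆ q.1 → α p → α q)

def IsCocone (g : ∀ p, α p → C) : Prop :=
  ∀ (p q : ProperSub n) (hpq : p.1 ⊆ q.1) (a : α p), g q (f p q hpq a) = g p a

structure IsDisjointCocone (g : ∀ p, α p → C) : Prop where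
  isCocone : IsCocone f g
  injective : ∀ p, Function.Injective (g p)
  range_inter_range : ∀ p q, Set.range (g p) ∩ Set.range (g q) = Set.range (g (interP p q))

variable {f} {g : ∀ p, α p → C} {g' : ∀ p, α p → D}

theorem IsDisjointCocone.exists_of_apply_eq (hg : IsDisjointCocone f g)
    {p q : ProperSub n} {a : α p} {b : α q} (hab : g p a = g q b) :
    ∃ c : α (interP p q), f _ p Finset.inter_subset_left c = a ∧
      f _ q Finset.inter_subset_right c = b := by
  obtain ⟨c, hc⟩ : g p a ∈ Set.range (g (interP p q)) := by
    rw [← hg.range_inter_range]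
    exact ⟨⟨a, rfl⟩, ⟨b, hab.symm⟩⟩
  exact ⟨c, hg.injective p ((hg.isCocone _ _ _ c).trans hc),
    hg.injective q ((hg.isCocone _ _ _ c).trans (hc.trans hab))⟩

theorem IsDisjointCocone.apply_eq_of_apply_eq (hg : IsDisjointCocone f g)
    (hg' : IsCocone f g') {p q : ProperSub n} {a : α p} {b : α q} (hab : g p a = g q b) :
    g' p a = g' q b := by
  obtain ⟨c, rfl, rfl⟩ := hg.exists_of_apply_eq hab
  exact (hg' _ _ _ c).trans (hg' _ _ _ c).symm

theorem IsDisjointCocone.pair (hg : IsDisjointCocone f g) (hg' : IsCocone f g') :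
    IsDisjointCocone f fun p a => (g p a, g' p a) := by
  have hpair : IsCocone f fun p a => (g p a, g' p a) :=
    fun p q hpq a => Prod.ext (hg.isCocone p q hpq a) (hg' p q hpq a)
  refine ⟨hpair, fun p _ _ h => hg.injective p (congrArg Prod.fst h), fun p q => ?_⟩
  refine Set.Subset.antisymm ?_ ?_
  · rintro _ ⟨⟨a, rfl⟩, ⟨b, hba⟩⟩
    obtain ⟨c, rfl, rfl⟩ := hg.exists_of_apply_eq (congrArg Prod.fst hba).symm
    exact ⟨c, (hpair _ _ _ c).symm⟩
  · rintro _ ⟨c, rfl⟩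
    exact ⟨⟨_, hpair _ p Finset.inter_subset_left c⟩,
      ⟨_, hpair _ q Finset.inter_subset_right c⟩⟩

theorem IsDisjointCocone.codRestrict (hg : IsDisjointCocone f g) {s : Set C}
    (hs : ∀ p a, g p a ∈ s) : IsDisjointCocone f fun p => s.codRestrict (g p) (hs p) where
  isCocone p q hpq a := Subtype.ext (hg.isCocone p q hpq a)
  injective p := (hg.injective p).codRestrict (hs p)
  range_inter_range p q := by
    simp only [Set.range_codRestrict, ← Set.preimage_inter, hg.range_inter_range]

end Cocone

theorem injOn_iUnion_range {ι β γ : Type*} {α : ι → Type*} {h : ∀ i, α i → β}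
    {π : β → γ}
    (hπ : ∀ i j a b, π (h i a) = π (h j b) → h i a = h j b) :
    Set.InjOn π (⋃ i, Set.range (h i)) := by
  intro x hx y hy hxy
  obtain ⟨i, a, rfl⟩ := Set.mem_iUnion.mp hx
  obtain ⟨j, b, rfl⟩ := Set.mem_iUnion.mp hy
  exact hπ i j a b hxy

section Reduct

variable {L' : FirstOrder.Language}

def bundledReduct (ϕ : L' →ᴸ L) (A : Bundled.{0} L.Structure) : Bundled.{0} L'.Structure :=
  ⟨A, ϕ.reduct A⟩

def embeddingReduct (ϕ : L' →ᴸ L) {A B : Bundled.{0} L.Structure} (e : A ↪[L] B) :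
    bundledReduct ϕ A ↪[L'] bundledReduct ϕ B where
  toFun := e
  inj' := e.injective
  map_fun' F x := e.map_fun (ϕ.onFunction F) x
  map_rel' R x := e.map_rel (ϕ.onRelation R) x

theorem DisjointNAmalg.exists_isDisjointCocone_reduct {K : StructClass L'} {n : ℕ}
    (hK : DisjointNAmalg K n) (ϕ : L' →ᴸ L) (A : ProperSub n → Bundled.{0} L.Structure)
    (f : ∀ p q : ProperSub n, p.1 ⊆ q.1 → (A p ↪[L] A q))
    (hA : ∀ p, bundledReduct ϕ (A p) ∈ K)
    (hid : ∀ (p : ProperSub n) (h : p.1 ⊆ p.1), f p p h = Embedding.refl L (A p))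
    (hcomp : ∀ (p q r : ProperSub n) (hpq : p.1 ⊆ q.1) (hqr : q.1 ⊆ r.1),
      f p r (hpq.trans hqr) = (f q r hqr).comp (f p q hpq))
    (hdisj : ∀ (p q r : ProperSub n) (hpr : p.1 ⊆ r.1) (hqr : q.1 ⊆ r.1),
      Set.range (f p r hpr) ∩ Set.range (f q r hqr)
        = Set.range (f (interP p q) r (Finset.inter_subset_left.trans hpr))) :
    ∃ C ∈ K, ∃ g : ∀ p, bundledReduct ϕ (A p) ↪[L'] C,
      IsDisjointCocone (fun p q hpq => ⇑(f p q hpq)) fun p => ⇑(g p) := by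
  obtain ⟨C, hC, g, hcomm, hrange⟩ := hK (fun p => bundledReduct ϕ (A p))
    (fun p q hpq => embeddingReduct ϕ (f p q hpq)) hA
    (fun p h => by rw [hid]; rfl) (fun p q r hpq hqr => by rw [hcomp]; rfl) hdisj
  exact ⟨C, hC, g, fun p q hpq a => DFunLike.congr_fun (hcomm p q hpq) a,
    fun p => (g p).injective, hrange⟩

end Reduct

section Relational

variable [L.IsRelational]

def embeddingCodRestrict {M N : Type*} [L.Structure M] [L.Structure N] (s : Set N)
    (e : M ↪[L] N) (h : ∀ x, e x ∈ s) : M ↪[L] s where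
  toFun := s.codRestrict e h
  inj' := e.injective.codRestrict h
  map_fun' F := isEmptyElim F
  map_rel' R x := e.map_rel R x

theorem HereditaryC.mem_of_embedding {K : StructClass L} (hher : HereditaryC K)
    (hiso : IsoClosed K) {A B : Bundled.{0} L.Structure} (hB : B ∈ K) (e : A ↪[L] B) :
    A ∈ K := by
  let iso : A ≃[L] (⟨Set.range e, setStructure L _⟩ : Bundled.{0} L.Structure) :=
    { toEquiv := Equiv.ofInjective e e.injective
      map_fun' := fun F => isEmptyElim F
      map_rel' := fun R x => e.map_rel R x }
  exact hiso _ (hher B hB _) A ⟨iso.symm⟩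

end Relational

section Superposition

variable [L0.IsRelational] [L1.IsRelational]

instance prodSumStructure (M N : Type*) [L0.Structure M] [L1.Structure N] :
    (L0.sum L1).Structure (M × N) :=
  @Language.sumStructure _ _ _ (fullStr0 M N) (fullStr1 M N)

def pairEmbedding {A : Bundled.{0} (L0.sum L1).Structure} {M N : Type*} [L0.Structure M]
    [L1.Structure N] (e0 : bundledReduct LHom.sumInl A ↪[L0] M)
    (e1 : bundledReduct LHom.sumInr A ↪[L1] N) : A ↪[L0.sum L1] M × N where
  toFun a := (e0 a, e1 a)
  inj' _ _ h := e0.injective (congrArg Prod.fst h)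
  map_fun' F := isEmptyElim F
  map_rel' R x := match R with
    | .inl R => e0.map_rel R x
    | .inr R => e1.map_rel R x

theorem mem_freeClass_of_injOn {K0 : StructClass L0} {K1 : StructClass L1}
    (hher0 : HereditaryC K0) (hiso0 : IsoClosed K0) (hher1 : HereditaryC K1)
    (hiso1 : IsoClosed K1) {C0 : Bundled.{0} L0.Structure} {C1 : Bundled.{0} L1.Structure}
    (hC0 : C0 ∈ K0) (hC1 : C1 ∈ K1) {Z : Set (C0 × C1)} (hZ : Z.Finite)
    (hfst : Z.InjOn Prod.fst) (hsnd : Z.InjOn Prod.snd) :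
    (⟨Z, setStructure _ Z⟩ : Bundled.{0} (L0.sum L1).Structure) ∈ freeClass K0 K1 :=
  ⟨hZ.to_subtype,
    hher0.mem_of_embedding hiso0 (A := bundledReduct LHom.sumInl ⟨Z, _⟩) hC0
      { toFun := Z.domRestrict Prod.fst
        inj' := hfst.injective
        map_fun' := fun F => isEmptyElim F
        map_rel' := fun _ _ => Iff.rfl },
    hher1.mem_of_embedding hiso1 (A := bundledReduct LHom.sumInr ⟨Z, _⟩) hC1
      { toFun := Z.domRestrict Prod.snd
        inj' := hsnd.injective
        map_fun' := fun F => isEmptyElim F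
        map_rel' := fun _ _ => Iff.rfl }⟩

end Superposition

theorem stmt3_general (L0 : FirstOrder.Language.{u0, v0}) (L1 : FirstOrder.Language.{u1, v1})
    [L0.IsRelational] [L1.IsRelational]
    (K0 : StructClass L0) (K1 : StructClass L1)
    (hiso0 : IsoClosed K0)
    (hiso1 : IsoClosed K1)
    (hher0 : HereditaryC K0) (hher1 : HereditaryC K1)
    (n : ℕ)
    (h0 : DisjointNAmalg K0 n) (h1 : DisjointNAmalg K1 n) :
    DisjointNAmalg (freeClass K0 K1) n := by
  intro A f hA hid hcomp hdisj
  obtain ⟨C0, hC0, g0, hg0⟩ := h0.exists_isDisjointCocone_reduct LHom.sumInl A f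
    (fun p => (hA p).2.1) hid hcomp hdisj
  obtain ⟨C1, hC1, g1, hg1⟩ := h1.exists_isDisjointCocone_reduct LHom.sumInr A f
    (fun p => (hA p).2.2) hid hcomp hdisj
  let e p := pairEmbedding (g0 p) (g1 p)
  let Z : Set (C0 × C1) := ⋃ p, Set.range (e p)
  have hmem : ∀ p a, e p a ∈ Z := fun p a => Set.mem_iUnion_of_mem p ⟨a, rfl⟩
  have hZ : Z.Finite := Set.finite_iUnion fun p => haveI := (hA p).1; Set.finite_range _
  have hfst : Z.InjOn Prod.fst := injOn_iUnion_range fun _ _ _ _ h =>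
    Prod.ext h (hg0.apply_eq_of_apply_eq hg1.isCocone h)
  have hsnd : Z.InjOn Prod.snd := injOn_iUnion_range fun _ _ _ _ h =>
    Prod.ext (hg1.apply_eq_of_apply_eq hg0.isCocone h) h
  have hZe : IsDisjointCocone (fun p q hpq => ⇑(f p q hpq))
      fun p => Z.codRestrict (e p) (hmem p) :=
    (hg0.pair hg1.isCocone).codRestrict hmem
  exact ⟨⟨Z, setStructure _ Z⟩,
    mem_freeClass_of_injOn hher0 hiso0 hher1 hiso1 hC0 hC1 hZ hfst hsnd,
    fun p => embeddingCodRestrict Z (e p) (hmem p),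
    fun p q hpq => Embedding.ext (hZe.isCocone p q hpq), hZe.range_inter_range⟩

/-- free superposition preserves disjoint n-amalgamation. -/
theorem stmt3 (L0 : FirstOrder.Language.{u0, v0}) (L1 : FirstOrder.Language.{u1, v1})
    [L0.IsRelational] [L1.IsRelational]
    (K0 : StructClass L0) (K1 : StructClass L1)
    (hfin0 : AllFinite K0) (hiso0 : IsoClosed K0)
    (hfin1 : AllFinite K1) (hiso1 : IsoClosed K1)
    (hher0 : HereditaryC K0) (hher1 : HereditaryC K1)
    (n : ℕ) (hn : 2 ≤ n)
    (h0 : DisjointNAmalg K0 n) (h1 : DisjointNAmalg K1 n) :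
    DisjointNAmalg (freeClass K0 K1) n :=
  stmt3_general L0 L1 K0 K1 hiso0 hiso1 hher0 hher1 n h0 h1

end ProductsPaper
end

section
/- Let L be a relational language and let K be a class of finite L-structures closed under isomorphism. If K has exactly one singleton structure up to isomorphism, K has the hereditary property, and K has the disjoint 3-amalgamation property, then K is definably self-similar. -/
/- Definitions following "Products of Classes of Finite Structures"
   (Guingona, Parnes, Scow). -/

open CategoryTheory FirstOrder FirstOrder.Language FirstOrder.Language.Structure

universe u v w w' u0 v0 u1 v1

namespace ProductsPaper

variable {L : FirstOrder.Language.{u, v}}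

variable {L0 : FirstOrder.Language.{u0, v0}} {L1 : FirstOrder.Language.{u1, v1}}

/-! ### Auxiliary development for Statement 6 -/

section DSSProofAux

variable {L : FirstOrder.Language.{u, v}} [L.IsRelational]

/-- Constructor for embeddings in a relational language. -/
def mkEmb {M N : Type w} [L.Structure M] [L.Structure N] (f : M → N)
    (hf : Function.Injective f)
    (hr : ∀ {n : ℕ} (R : L.Relations n) (x : Fin n → M), RelMap R (f ∘ x) ↔ RelMap R x) :
    M ↪[L] N :=
  ⟨⟨f, hf⟩, fun F _ => isEmptyElim F, hr⟩

@[simp] lemma mkEmb_apply {M N : Type w} [L.Structure M] [L.Structure N] (f : M → N)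
    (hf) (hr) (x : M) : (mkEmb f hf hr : M ↪[L] N) x = f x := rfl

/-- Constructor for isomorphisms in a relational language. -/
def mkEquiv {M N : Type w} [L.Structure M] [L.Structure N] (e : M ≃ N)
    (hr : ∀ {n : ℕ} (R : L.Relations n) (x : Fin n → M), RelMap R (e ∘ x) ↔ RelMap R x) :
    M ≃[L] N :=
  ⟨e, fun F _ => isEmptyElim F, hr⟩

lemma singleton_rel {K : StructClass L} (hsing : UniqueSingleton K) (hher : HereditaryC K)
    {Bb C : Bundled.{0} L.Structure} (hB : Bb ∈ K) (hC : C ∈ K) (b0 : Bb) (c : C)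
    {n : ℕ} (R : L.Relations n) :
    RelMap R (fun _ : Fin n => b0) ↔ RelMap R (fun _ : Fin n => c) := by
  have h1 := hher Bb hB {b0}
  have h2 := hher C hC {c}
  obtain ⟨e⟩ := hsing.2 _ _ h1 h2 ⟨⟨b0, rfl⟩⟩
    ⟨fun a b => Subtype.ext (a.2.trans b.2.symm)⟩ ⟨⟨c, rfl⟩⟩
    ⟨fun a b => Subtype.ext (a.2.trans b.2.symm)⟩
  have h := e.map_rel R (fun _ => ⟨b0, rfl⟩)
  have hv : ((e ⟨b0, rfl⟩ : ({c} : Set C)) : C) = c := (e ⟨b0, rfl⟩).2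
  constructor
  · intro hb
    have h' : RelMap R (⇑e ∘ fun _ : Fin n => (⟨b0, rfl⟩ : ({b0} : Set Bb))) := h.mpr hb
    have : RelMap R (fun i : Fin n => ((e ⟨b0, rfl⟩ : ({c} : Set C)) : C)) := h'
    rwa [hv] at this
  · intro hc'
    apply h.mp
    show RelMap R (fun i : Fin n => ((e ⟨b0, rfl⟩ : ({c} : Set C)) : C))
    rw [hv]; exact hc'

end DSSProofAux

section OnePointSec

variable {L : FirstOrder.Language.{u, v}} [L.IsRelational]

/-- Context for the one-point extension lemma. -/
structure OPCtx (L : FirstOrder.Language.{u, v}) [L.IsRelational] where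
  Bb : Bundled.{0} L.Structure
  C : Bundled.{0} L.Structure
  t : Set Bb
  b0 : Bb
  C0 : Set C
  c : C
  hb0 : b0 ∉ t
  hc : c ∉ C0
  g : (t : Set Bb) ↪[L] ((qfClassSet L C0 c : Set C) : Type)

variable (X : OPCtx L)

namespace OPCtx

def gval : X.t → X.C := fun a => ((X.g a : qfClassSet L X.C0 X.c) : X.C)

lemma gval_inj : Function.Injective X.gval :=
  fun a b h => X.g.injective (Subtype.ext h)

lemma gval_not_mem (a : X.t) : X.gval a ∉ X.C0 := (X.g a).2.1

lemma gval_qf (a : X.t) : X.gval a ∈ qfClassSet L X.C0 X.c := (X.g a).2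

def G : Set X.C := Set.range X.gval

def Bi : Set X.Bb := insert X.b0 X.t

abbrev Z : Type := X.C ⊕ X.Bb

instance zStr : L.Structure X.Z where
  funMap F _ := isEmptyElim F
  RelMap {n} R x := (∃ y : Fin n → X.C, x = Sum.inl ∘ y ∧ RelMap R y) ∨
    (∃ y : Fin n → X.Bb, x = Sum.inr ∘ y ∧ RelMap R y)

instance zStr2 : L.Structure ((X.C : Type) ⊕ (X.Bb : Type)) := X.zStr

/-- agreement of nullary relations, to be derived from `UniqueSingleton`. -/
def Agree : Prop := ∀ {n : ℕ} (R : L.Relations n),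
  RelMap R (fun _ : Fin n => X.b0) ↔ RelMap R (fun _ : Fin n => X.c)

lemma zrel_inl (h0 : X.Agree) {n : ℕ} (R : L.Relations n) (y : Fin n → X.C) :
    RelMap R (Sum.inl ∘ y : Fin n → X.Z) ↔ RelMap R y := by
  constructor
  · rintro (⟨y', h, hr⟩ | ⟨y', h, hr⟩)
    · have : y = y' := funext fun i => Sum.inl.inj (congrFun h i)
      rwa [this]
    · cases n with
      | zero =>
        have h1 : RelMap R (fun _ : Fin 0 => X.b0) := by
          convert hr using 2
        have h2 := (h0 R).mp h1
        convert h2 using 2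
      | succ m => exact absurd (congrFun h 0) (by simp)
  · intro hr; exact Or.inl ⟨y, rfl, hr⟩

lemma zrel_inr (h0 : X.Agree) {n : ℕ} (R : L.Relations n) (y : Fin n → X.Bb) :
    RelMap R (Sum.inr ∘ y : Fin n → X.Z) ↔ RelMap R y := by
  constructor
  · rintro (⟨y', h, hr⟩ | ⟨y', h, hr⟩)
    · cases n with
      | zero =>
        have h1 : RelMap R (fun _ : Fin 0 => X.c) := by
          convert hr using 2
        have h2 := (h0 R).mpr h1
        convert h2 using 2
      | succ m => exact absurd (congrFun h 0) (by simp)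
    · have : y = y' := funext fun i => Sum.inr.inj (congrFun h i)
      rwa [this]
  · intro hr; exact Or.inr ⟨y, rfl, hr⟩

end OPCtx

end OnePointSec

section OnePointSec2

variable {L : FirstOrder.Language.{u, v}} [L.IsRelational] (X : OPCtx L)

namespace OPCtx

def SS (p : Finset (Fin 3)) : Set X.C :=
  (if (0 : Fin 3) ∈ p then X.C0 else ∅) ∪ (if (1 : Fin 3) ∈ p then {X.c} else ∅) ∪
    (if (2 : Fin 3) ∈ p then X.G else ∅) ∪
    (if (0 : Fin 3) ∈ p ∧ (2 : Fin 3) ∈ p then Set.univ else ∅)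

lemma SS_empty {p : Finset (Fin 3)} (h0 : (0:Fin 3) ∉ p) (h1 : (1:Fin 3) ∉ p)
    (h2 : (2:Fin 3) ∉ p) : X.SS p = ∅ := by simp [SS, h0, h1, h2]

lemma SS_c {p : Finset (Fin 3)} (h0 : (0:Fin 3) ∉ p) (h1 : (1:Fin 3) ∈ p)
    (h2 : (2:Fin 3) ∉ p) : X.SS p = {X.c} := by simp [SS, h0, h1, h2]

lemma SS_G {p : Finset (Fin 3)} (h0 : (0:Fin 3) ∉ p) (h1 : (1:Fin 3) ∉ p)
    (h2 : (2:Fin 3) ∈ p) : X.SS p = X.G := by simp [SS, h0, h1, h2]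

lemma SS_univ {p : Finset (Fin 3)} (h0 : (0:Fin 3) ∈ p) (h2 : (2:Fin 3) ∈ p) :
    X.SS p = Set.univ := by simp [SS, h0, h2]

lemma SS_mono {p q : Finset (Fin 3)} (hpq : p ⊆ q) : X.SS p ⊆ X.SS q := by
  have h0 : (0:Fin 3) ∈ p → (0:Fin 3) ∈ q := fun h => hpq h
  have h1 : (1:Fin 3) ∈ p → (1:Fin 3) ∈ q := fun h => hpq h
  have h2 : (2:Fin 3) ∈ p → (2:Fin 3) ∈ q := fun h => hpq h
  have hblock : ∀ (P Q : Prop) [Decidable P] [Decidable Q] (s : Set X.C), (P → Q) →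
      (if P then s else ∅) ⊆ (if Q then s else ∅) := by
    intro P Q _ _ s h
    split_ifs with hP hQ <;> simp_all
  exact Set.union_subset_union (Set.union_subset_union (Set.union_subset_union
    (hblock _ _ _ h0) (hblock _ _ _ h1)) (hblock _ _ _ h2))
    (hblock _ _ _ (fun hh => ⟨h0 hh.1, h2 hh.2⟩))

set_option maxHeartbeats 4000000 in
lemma Sinter (p q r : Finset (Fin 3)) (hr : r ≠ Finset.univ) (hpr : p ⊆ r) (hqr : q ⊆ r)
    (hc12 : ¬((1:Fin 3) ∈ r ∧ (2:Fin 3) ∈ r)) :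
    X.SS p ∩ X.SS q = X.SS (p ∩ q) := by
  have hr3 : ((0:Fin 3) ∉ p ∧ (0:Fin 3) ∉ q) ∨ ((1:Fin 3) ∉ p ∧ (1:Fin 3) ∉ q) ∨
      ((2:Fin 3) ∉ p ∧ (2:Fin 3) ∉ q) := by
    have : (0:Fin 3) ∉ r ∨ (1:Fin 3) ∉ r ∨ (2:Fin 3) ∉ r := by
      by_contra h
      push_neg at h
      exact hr (Finset.eq_univ_of_forall fun i => by fin_cases i <;> tauto)
    rcases this with h | h | h
    · exact Or.inl ⟨fun hx => h (hpr hx), fun hx => h (hqr hx)⟩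
    · exact Or.inr (Or.inl ⟨fun hx => h (hpr hx), fun hx => h (hqr hx)⟩)
    · exact Or.inr (Or.inr ⟨fun hx => h (hpr hx), fun hx => h (hqr hx)⟩)
  have e12a : ¬((1:Fin 3) ∈ p ∧ (2:Fin 3) ∈ q) := fun h => hc12 ⟨hpr h.1, hqr h.2⟩
  have e12b : ¬((1:Fin 3) ∈ q ∧ (2:Fin 3) ∈ p) := fun h => hc12 ⟨hqr h.1, hpr h.2⟩
  have e12c : ¬((1:Fin 3) ∈ p ∧ (2:Fin 3) ∈ p) := fun h => hc12 ⟨hpr h.1, hpr h.2⟩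
  have e12d : ¬((1:Fin 3) ∈ q ∧ (2:Fin 3) ∈ q) := fun h => hc12 ⟨hqr h.1, hqr h.2⟩
  ext x
  have hc' := X.hc
  have hGC : ∀ y ∈ X.G, y ∉ X.C0 := by rintro _ ⟨a, rfl⟩; exact X.gval_not_mem a
  simp only [SS, Set.mem_union, Set.mem_inter_iff, Finset.mem_inter]
  by_cases h0p : (0:Fin 3) ∈ p <;> by_cases h1p : (1:Fin 3) ∈ p <;>
    by_cases h2p : (2:Fin 3) ∈ p <;> by_cases h0q : (0:Fin 3) ∈ q <;>
    by_cases h1q : (1:Fin 3) ∈ q <;> by_cases h2q : (2:Fin 3) ∈ q <;>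
    by_cases hx0 : x ∈ X.C0 <;> by_cases hx2 : x ∈ X.G <;>
    by_cases hx1 : x = X.c <;> (try subst hx1) <;> simp_all

end OPCtx

end OnePointSec2

section OnePointSec3

variable {L : FirstOrder.Language.{u, v}} [L.IsRelational] (X : OPCtx L)

lemma fs_eq12 : ∀ s : Finset (Fin 3), s ≠ Finset.univ → (1:Fin 3) ∈ s → (2:Fin 3) ∈ s →
    s = {1, 2} := by decide

lemma fs_sub12 : ∀ s : Finset (Fin 3), s ⊆ {1, 2} → (0:Fin 3) ∉ s := by decide

namespace OPCtx

def SZ (p : ProperSub 3) : Set X.Z :=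
  if (1:Fin 3) ∈ p.1 ∧ (2:Fin 3) ∈ p.1 then Sum.inr '' X.Bi else Sum.inl '' X.SS p.1

abbrev bigA (p : ProperSub 3) : Bundled.{0} L.Structure := ⟨↥(X.SZ p), setStructure L (X.SZ p)⟩

noncomputable def psi (p : Finset (Fin 3)) : X.Z → X.Z
  | Sum.inl x => Sum.inr (if (1:Fin 3) ∈ p then X.b0
      else Function.extend X.gval Subtype.val (fun _ => X.b0) x)
  | Sum.inr y => Sum.inr y

noncomputable def mvalZ (p q : ProperSub 3) (z : X.Z) : X.Z :=
  if ((1:Fin 3) ∈ q.1 ∧ (2:Fin 3) ∈ q.1) ∧ ¬((1:Fin 3) ∈ p.1 ∧ (2:Fin 3) ∈ p.1) then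
    X.psi p.1 z else z

lemma SZ_pos {p : ProperSub 3} (h : (1:Fin 3) ∈ p.1 ∧ (2:Fin 3) ∈ p.1) :
    X.SZ p = Sum.inr '' X.Bi := if_pos h

lemma SZ_neg {p : ProperSub 3} (h : ¬((1:Fin 3) ∈ p.1 ∧ (2:Fin 3) ∈ p.1)) :
    X.SZ p = Sum.inl '' X.SS p.1 := if_neg h

lemma not_cnd_of_le {p q : ProperSub 3} (hpq : p.1 ⊆ q.1)
    (hq : ¬((1:Fin 3) ∈ q.1 ∧ (2:Fin 3) ∈ q.1)) :
    ¬((1:Fin 3) ∈ p.1 ∧ (2:Fin 3) ∈ p.1) := fun hp => hq ⟨hpq hp.1, hpq hp.2⟩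

lemma SS_c_of {p q : ProperSub 3} (hpq : p.1 ⊆ q.1)
    (hq : (1:Fin 3) ∈ q.1 ∧ (2:Fin 3) ∈ q.1)
    (hp : ¬((1:Fin 3) ∈ p.1 ∧ (2:Fin 3) ∈ p.1)) (h1 : (1:Fin 3) ∈ p.1) :
    X.SS p.1 = {X.c} := by
  have hq12 : q.1 = {1, 2} := fs_eq12 _ q.2 hq.1 hq.2
  exact X.SS_c (fs_sub12 _ (hq12 ▸ hpq)) h1 (fun h2 => hp ⟨h1, h2⟩)

lemma SS_Gor {p q : ProperSub 3} (hpq : p.1 ⊆ q.1)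
    (hq : (1:Fin 3) ∈ q.1 ∧ (2:Fin 3) ∈ q.1) (h1 : (1:Fin 3) ∉ p.1) :
    X.SS p.1 = X.G ∨ X.SS p.1 = ∅ := by
  have hq12 : q.1 = {1, 2} := fs_eq12 _ q.2 hq.1 hq.2
  have h0 := fs_sub12 _ (hq12 ▸ hpq)
  by_cases h2 : (2:Fin 3) ∈ p.1
  · exact Or.inl (X.SS_G h0 h1 h2)
  · exact Or.inr (X.SS_empty h0 h1 h2)

lemma psi_gval (p : Finset (Fin 3)) (h1 : (1:Fin 3) ∉ p) (a : X.t) :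
    X.psi p (Sum.inl (X.gval a)) = Sum.inr (a : X.Bb) := by
  simp [psi, h1, X.gval_inj.extend_apply]

lemma mvalZ_mem {p q : ProperSub 3} (hpq : p.1 ⊆ q.1) {z : X.Z} (hz : z ∈ X.SZ p) :
    X.mvalZ p q z ∈ X.SZ q := by
  unfold mvalZ
  split_ifs with h
  · rw [X.SZ_pos h.1]
    rw [X.SZ_neg h.2] at hz
    obtain ⟨x, hx, rfl⟩ := hz
    by_cases h1 : (1:Fin 3) ∈ p.1
    · exact ⟨X.b0, Set.mem_insert _ _, by simp [psi, h1]⟩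
    · rcases X.SS_Gor hpq h.1 h1 with hG | hE
      · rw [hG] at hx
        obtain ⟨a, rfl⟩ := hx
        exact ⟨a, Set.mem_insert_of_mem _ a.2, (X.psi_gval _ h1 a).symm⟩
      · rw [hE] at hx; exact absurd hx (Set.notMem_empty x)
  · by_cases hq : (1:Fin 3) ∈ q.1 ∧ (2:Fin 3) ∈ q.1
    · have hp : (1:Fin 3) ∈ p.1 ∧ (2:Fin 3) ∈ p.1 := by tauto
      rw [X.SZ_pos hq]; rwa [X.SZ_pos hp] at hz
    · rw [X.SZ_neg hq]; rw [X.SZ_neg (not_cnd_of_le hpq hq)] at hz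
      exact Set.image_mono (X.SS_mono hpq) hz

lemma mvalZ_injOn {p q : ProperSub 3} (hpq : p.1 ⊆ q.1) :
    Set.InjOn (X.mvalZ p q) (X.SZ p) := by
  unfold mvalZ
  split_ifs with h
  · rw [X.SZ_neg h.2]
    rintro _ ⟨x, hx, rfl⟩ _ ⟨x', hx', rfl⟩ heq
    by_cases h1 : (1:Fin 3) ∈ p.1
    · rw [X.SS_c_of hpq h.1 h.2 h1] at hx hx'
      simp only [Set.mem_singleton_iff] at hx hx'
      rw [hx, hx']
    · rcases X.SS_Gor hpq h.1 h1 with hG | hE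
      · rw [hG] at hx hx'
        obtain ⟨a, rfl⟩ := hx
        obtain ⟨a', rfl⟩ := hx'
        simp only [X.psi_gval _ h1] at heq
        have : a = a' := Subtype.ext (Sum.inr.inj heq)
        rw [this]
      · rw [hE] at hx; exact absurd hx (Set.notMem_empty _)
  · exact fun _ _ _ _ h => h

lemma mvalZ_rel (hag : X.Agree) {p q : ProperSub 3} (hpq : p.1 ⊆ q.1) {n : ℕ}
    (R : L.Relations n) (x : Fin n → X.Z) (hx : ∀ i, x i ∈ X.SZ p) :
    RelMap R (fun i => X.mvalZ p q (x i)) ↔ RelMap R x := by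
  unfold mvalZ
  split_ifs with h
  · have hx' : ∀ i, x i ∈ Sum.inl '' X.SS p.1 := by
      intro i; rw [← X.SZ_neg h.2]; exact hx i
    by_cases h1 : (1:Fin 3) ∈ p.1
    · have hxe : ∀ i, x i = Sum.inl X.c := by
        intro i
        obtain ⟨y, hy, hval⟩ := hx' i
        rw [X.SS_c_of hpq h.1 h.2 h1] at hy
        simp only [Set.mem_singleton_iff] at hy
        rw [← hval, hy]
      have hxx : x = Sum.inl ∘ (fun _ => X.c) := funext hxe
      have hmm : (fun i => X.psi p.1 (x i)) = Sum.inr ∘ (fun _ => X.b0) := by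
        funext i; rw [hxe i]; simp [psi, h1]
      rw [hmm, hxx, X.zrel_inl hag, X.zrel_inr hag]
      exact hag R
    · rcases X.SS_Gor hpq h.1 h1 with hG | hE
      · have : ∀ i, ∃ a : X.t, x i = Sum.inl (X.gval a) := by
          intro i
          obtain ⟨y, hy, hval⟩ := hx' i
          rw [hG] at hy
          obtain ⟨a, rfl⟩ := hy
          exact ⟨a, hval.symm⟩
        choose a ha using this
        have hxx : x = Sum.inl ∘ (X.gval ∘ a) := funext ha
        have hmm : (fun i => X.psi p.1 (x i)) = Sum.inr ∘ (fun i => ((a i : X.t) : X.Bb)) := by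
          funext i; rw [ha i]; exact X.psi_gval _ h1 (a i)
        rw [hmm, hxx, X.zrel_inl hag, X.zrel_inr hag]
        have step1 : RelMap R (fun i => ((a i : X.t) : X.Bb)) ↔ RelMap R a := Iff.rfl
        have step2 : RelMap R a ↔ RelMap R (⇑X.g ∘ a) := (X.g.map_rel R a).symm
        have step3 : RelMap R (⇑X.g ∘ a) ↔ RelMap R (X.gval ∘ a) := Iff.rfl
        rw [step1, step2, step3]
      · cases n with
        | zero =>
          have : (fun i => X.psi p.1 (x i)) = x := funext fun i => isEmptyElim i
          rw [this]
        | succ m =>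
          have := hx' 0
          rw [hE] at this
          simp at this
  · exact Iff.rfl

end OPCtx

end OnePointSec3

section OnePointSec4

variable {L : FirstOrder.Language.{u, v}} [L.IsRelational] (X : OPCtx L)

namespace OPCtx

noncomputable def bigF (hag : X.Agree) (p q : ProperSub 3) (hpq : p.1 ⊆ q.1) :
    X.bigA p ↪[L] X.bigA q :=
  mkEmb (fun z => ⟨X.mvalZ p q z.1, X.mvalZ_mem hpq z.2⟩)
    (fun z z' h => Subtype.ext (X.mvalZ_injOn hpq z.2 z'.2 (congrArg Subtype.val h)))
    (fun {n} R x => by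
      show RelMap R (fun i => X.mvalZ p q ((x i).1)) ↔ RelMap R (fun i => ((x i).1))
      exact X.mvalZ_rel hag hpq R (fun i => (x i).1) (fun i => (x i).2))

lemma bigF_val (hag : X.Agree) {p q : ProperSub 3} (hpq : p.1 ⊆ q.1) (z : X.bigA p) :
    (X.bigF hag p q hpq z).1 = X.mvalZ p q z.1 := rfl

lemma bigF_refl (hag : X.Agree) (p : ProperSub 3) (h : p.1 ⊆ p.1) :
    X.bigF hag p p h = Embedding.refl L (X.bigA p) := by
  refine Embedding.ext fun z => ?_
  refine Subtype.ext ?_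
  show X.mvalZ p p z.1 = z.1
  unfold mvalZ
  rw [if_neg (by tauto)]

lemma mvalZ_comp {p q r : ProperSub 3} (hpq : p.1 ⊆ q.1) (hqr : q.1 ⊆ r.1) {z : X.Z}
    (hz : z ∈ X.SZ p) : X.mvalZ q r (X.mvalZ p q z) = X.mvalZ p r z := by
  unfold mvalZ
  by_cases hcr : (1:Fin 3) ∈ r.1 ∧ (2:Fin 3) ∈ r.1
  · by_cases hcp : (1:Fin 3) ∈ p.1 ∧ (2:Fin 3) ∈ p.1
    · have hcq : (1:Fin 3) ∈ q.1 ∧ (2:Fin 3) ∈ q.1 := ⟨hpq hcp.1, hpq hcp.2⟩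
      rw [if_neg (by tauto), if_neg (by tauto), if_neg (by tauto)]
    · by_cases hcq : (1:Fin 3) ∈ q.1 ∧ (2:Fin 3) ∈ q.1
      · rw [if_neg (by tauto), if_pos ⟨hcq, hcp⟩, if_pos ⟨hcr, hcp⟩]
      · rw [if_pos ⟨hcr, hcq⟩, if_neg (by tauto), if_pos ⟨hcr, hcp⟩]
        rw [X.SZ_neg hcp] at hz
        obtain ⟨x, hx, rfl⟩ := hz
        by_cases h1p : (1:Fin 3) ∈ p.1
        · have h1q : (1:Fin 3) ∈ q.1 := hpq h1p
          simp [psi, h1p, h1q]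
        · by_cases h1q : (1:Fin 3) ∈ q.1
          · have hr12 : r.1 = {1, 2} := fs_eq12 _ r.2 hcr.1 hcr.2
            have h0 : (0:Fin 3) ∉ p.1 := fs_sub12 _ (hr12 ▸ (hpq.trans hqr))
            have h2 : (2:Fin 3) ∉ p.1 := fun h2 => hcq ⟨h1q, hpq h2⟩
            rw [X.SS_empty h0 h1p h2] at hx
            exact absurd hx (Set.notMem_empty _)
          · simp [psi, h1p, h1q]
  · have hcq : ¬((1:Fin 3) ∈ q.1 ∧ (2:Fin 3) ∈ q.1) := fun h => hcr ⟨hqr h.1, hqr h.2⟩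
    have hcp : ¬((1:Fin 3) ∈ p.1 ∧ (2:Fin 3) ∈ p.1) := fun h => hcq ⟨hpq h.1, hpq h.2⟩
    rw [if_neg (by tauto), if_neg (by tauto), if_neg (by tauto)]

lemma bigF_comp (hag : X.Agree) (p q r : ProperSub 3) (hpq : p.1 ⊆ q.1) (hqr : q.1 ⊆ r.1) :
    X.bigF hag p r (hpq.trans hqr) = (X.bigF hag q r hqr).comp (X.bigF hag p q hpq) := by
  refine Embedding.ext fun z => ?_
  refine Subtype.ext ?_
  show X.mvalZ p r z.1 = X.mvalZ q r (X.mvalZ p q z.1)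
  exact (X.mvalZ_comp hpq hqr z.2).symm

lemma bigF_range (hag : X.Agree) {p r : ProperSub 3} (hpr : p.1 ⊆ r.1) :
    Set.range (X.bigF hag p r hpr) = Subtype.val ⁻¹' (X.mvalZ p r '' X.SZ p) := by
  ext y
  constructor
  · rintro ⟨x, rfl⟩
    exact ⟨x.1, x.2, rfl⟩
  · rintro ⟨z, hz, hzy⟩
    exact ⟨⟨z, hz⟩, Subtype.ext hzy⟩

def TT (p : ProperSub 3) : Set X.Bb :=
  if (1:Fin 3) ∈ p.1 ∧ (2:Fin 3) ∈ p.1 then X.Bi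
  else if (1:Fin 3) ∈ p.1 then {X.b0}
  else if (2:Fin 3) ∈ p.1 then X.t
  else ∅

lemma mimage_eval {p r : ProperSub 3} (hpr : p.1 ⊆ r.1)
    (hcr : (1:Fin 3) ∈ r.1 ∧ (2:Fin 3) ∈ r.1) :
    X.mvalZ p r '' X.SZ p = Sum.inr '' X.TT p := by
  by_cases hcp : (1:Fin 3) ∈ p.1 ∧ (2:Fin 3) ∈ p.1
  · have hid : ∀ z ∈ X.SZ p, X.mvalZ p r z = z := fun z _ => by
      unfold mvalZ; rw [if_neg (by tauto)]
    rw [Set.image_congr hid, Set.image_id', X.SZ_pos hcp]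
    unfold TT
    rw [if_pos hcp]
  · have himg : X.mvalZ p r '' X.SZ p = (X.psi p.1 ∘ Sum.inl) '' X.SS p.1 := by
      rw [X.SZ_neg hcp, ← Set.image_comp]
      exact Set.image_congr fun z _ => by
        simp only [Function.comp_apply, mvalZ]
        rw [if_pos ⟨hcr, hcp⟩]
    unfold TT
    rw [himg, if_neg hcp]
    by_cases h1 : (1:Fin 3) ∈ p.1
    · rw [if_pos h1, X.SS_c_of hpr hcr hcp h1]
      ext w
      simp [psi, h1]
    · rw [if_neg h1]
      have hr12 : r.1 = {1, 2} := fs_eq12 _ r.2 hcr.1 hcr.2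
      have h0 : (0:Fin 3) ∉ p.1 := fs_sub12 _ (hr12 ▸ hpr)
      by_cases h2 : (2:Fin 3) ∈ p.1
      · rw [if_pos h2, X.SS_G h0 h1 h2]
        ext w
        constructor
        · rintro ⟨x, ⟨a, rfl⟩, rfl⟩
          exact ⟨(a : X.Bb), a.2, (X.psi_gval _ h1 a).symm⟩
        · rintro ⟨b, hb, rfl⟩
          exact ⟨X.gval ⟨b, hb⟩, ⟨⟨b, hb⟩, rfl⟩, X.psi_gval _ h1 ⟨b, hb⟩⟩
      · rw [if_neg h2, X.SS_empty h0 h1 h2]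
        simp

lemma TT_inter {p q r : ProperSub 3} (hpr : p.1 ⊆ r.1) (hqr : q.1 ⊆ r.1)
    (hcr : (1:Fin 3) ∈ r.1 ∧ (2:Fin 3) ∈ r.1) :
    X.TT p ∩ X.TT q = X.TT (interP p q) := by
  have hb0t : X.b0 ∉ X.t := X.hb0
  have e1 : X.Bi ∩ X.t = X.t := Set.inter_eq_right.mpr (Set.subset_insert _ _)
  have e2 : X.t ∩ X.Bi = X.t := Set.inter_eq_left.mpr (Set.subset_insert _ _)
  have e3 : X.Bi ∩ {X.b0} = {X.b0} :=
    Set.inter_eq_right.mpr (Set.singleton_subset_iff.mpr (Set.mem_insert _ _))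
  have e4 : ({X.b0} : Set X.Bb) ∩ X.Bi = {X.b0} :=
    Set.inter_eq_left.mpr (Set.singleton_subset_iff.mpr (Set.mem_insert _ _))
  have e5 : ({X.b0} : Set X.Bb) ∩ X.t = ∅ := Set.singleton_inter_eq_empty.mpr hb0t
  have e6 : X.t ∩ ({X.b0} : Set X.Bb) = ∅ := Set.inter_singleton_eq_empty.mpr hb0t
  unfold TT interP
  simp only [Finset.mem_inter]
  by_cases h1p : (1:Fin 3) ∈ p.1 <;> by_cases h2p : (2:Fin 3) ∈ p.1 <;>
    by_cases h1q : (1:Fin 3) ∈ q.1 <;> by_cases h2q : (2:Fin 3) ∈ q.1 <;>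
    simp_all

lemma mimage_inter {p q r : ProperSub 3} (hpr : p.1 ⊆ r.1) (hqr : q.1 ⊆ r.1) :
    X.mvalZ p r '' X.SZ p ∩ X.mvalZ q r '' X.SZ q
      = X.mvalZ (interP p q) r '' X.SZ (interP p q) := by
  have hiq : (interP p q).1 ⊆ r.1 := Finset.inter_subset_left.trans hpr
  by_cases hcr : (1:Fin 3) ∈ r.1 ∧ (2:Fin 3) ∈ r.1
  · rw [X.mimage_eval hpr hcr, X.mimage_eval hqr hcr, X.mimage_eval hiq hcr,
      ← Set.image_inter Sum.inr_injective, X.TT_inter hpr hqr hcr]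
  · have hid : ∀ (s : ProperSub 3) (hs : s.1 ⊆ r.1), X.mvalZ s r '' X.SZ s = X.SZ s := by
      intro s hs
      have h : ∀ z ∈ X.SZ s, X.mvalZ s r z = z := fun z _ => by
        unfold mvalZ; rw [if_neg (by tauto)]
      rw [Set.image_congr h, Set.image_id']
    rw [hid p hpr, hid q hqr, hid _ hiq]
    have hcp := not_cnd_of_le hpr hcr
    have hcq := not_cnd_of_le hqr hcr
    have hcpq := not_cnd_of_le hiq hcr
    rw [X.SZ_neg hcp, X.SZ_neg hcq, X.SZ_neg hcpq,
      ← Set.image_inter Sum.inl_injective, X.Sinter p.1 q.1 r.1 r.2 hpr hqr hcr]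
    rfl

lemma bigF_disj (hag : X.Agree) (p q r : ProperSub 3) (hpr : p.1 ⊆ r.1) (hqr : q.1 ⊆ r.1) :
    Set.range (X.bigF hag p r hpr) ∩ Set.range (X.bigF hag q r hqr)
      = Set.range (X.bigF hag (interP p q) r (Finset.inter_subset_left.trans hpr)) := by
  rw [X.bigF_range hag hpr, X.bigF_range hag hqr,
    X.bigF_range hag (Finset.inter_subset_left.trans hpr), ← Set.preimage_inter,
    X.mimage_inter hpr hqr]

lemma bigA_mem (hag : X.Agree) {K : StructClass L} (hiso : IsoClosed K)
    (hher : HereditaryC K) (hBb : X.Bb ∈ K) (hC : X.C ∈ K) (p : ProperSub 3) :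
    X.bigA p ∈ K := by
  by_cases hcp : (1:Fin 3) ∈ p.1 ∧ (2:Fin 3) ∈ p.1
  · apply hiso _ (hher X.Bb hBb X.Bi)
    have hf : ∀ x : X.Bi, Sum.inr x.1 ∈ X.SZ p := fun x => by
      rw [X.SZ_pos hcp]; exact ⟨x.1, x.2, rfl⟩
    have hbij : Function.Bijective (fun x : X.Bi => (⟨Sum.inr x.1, hf x⟩ : X.SZ p)) := by
      constructor
      · intro a b h
        exact Subtype.ext (Sum.inr.inj (congrArg Subtype.val h))
      · rintro ⟨y, hy⟩
        rw [X.SZ_pos hcp] at hy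
        obtain ⟨b, hb, rfl⟩ := hy
        exact ⟨⟨b, hb⟩, rfl⟩
    refine ⟨mkEquiv (Equiv.ofBijective _ hbij) fun {n} R x => ?_⟩
    show RelMap R (fun i => (Sum.inr ((x i).1) : X.Z)) ↔ RelMap R (fun i => (x i).1)
    exact X.zrel_inr hag R (fun i => (x i).1)
  · apply hiso _ (hher X.C hC (X.SS p.1))
    have hf : ∀ x : X.SS p.1, Sum.inl x.1 ∈ X.SZ p := fun x => by
      rw [X.SZ_neg hcp]; exact ⟨x.1, x.2, rfl⟩
    have hbij : Function.Bijective (fun x : X.SS p.1 => (⟨Sum.inl x.1, hf x⟩ : X.SZ p)) := by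
      constructor
      · intro a b h
        exact Subtype.ext (Sum.inl.inj (congrArg Subtype.val h))
      · rintro ⟨y, hy⟩
        rw [X.SZ_neg hcp] at hy
        obtain ⟨b, hb, rfl⟩ := hy
        exact ⟨⟨b, hb⟩, rfl⟩
    refine ⟨mkEquiv (Equiv.ofBijective _ hbij) fun {n} R x => ?_⟩
    show RelMap R (fun i => (Sum.inl ((x i).1) : X.Z)) ↔ RelMap R (fun i => (x i).1)
    exact X.zrel_inl hag R (fun i => (x i).1)

end OPCtx

end OnePointSec4

section OnePointSec5

def ps0 : ProperSub 3 := ⟨{0}, by decide⟩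
def ps1 : ProperSub 3 := ⟨{1}, by decide⟩
def ps2 : ProperSub 3 := ⟨{2}, by decide⟩
def ps01 : ProperSub 3 := ⟨{0, 1}, by decide⟩
def ps02 : ProperSub 3 := ⟨{0, 2}, by decide⟩
def ps12 : ProperSub 3 := ⟨{1, 2}, by decide⟩

variable {L : FirstOrder.Language.{u, v}} [L.IsRelational]

theorem onePoint {K : StructClass L} (hiso : IsoClosed K) (hsing : UniqueSingleton K)
    (hher : HereditaryC K) (h3 : DisjointNAmalg K 3) (X : OPCtx L)
    (hBb : X.Bb ∈ K) (hC : X.C ∈ K) :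
    ∃ D ∈ K, ∃ j : X.C ↪[L] D,
      ∃ h : ((X.Bi : Set X.Bb) : Type) ↪[L] ((qfClassSet L (⇑j '' X.C0) (j X.c) : Set D) : Type),
      ∀ (x : X.Bi) (hx : (x : X.Bb) ∈ X.t), ((h x : qfClassSet L (⇑j '' X.C0) (j X.c)) : D)
        = j (X.gval ⟨(x : X.Bb), hx⟩) := by
  classical
  have hag : X.Agree := fun {n} R => singleton_rel hsing hher hBb hC X.b0 X.c R
  obtain ⟨Cd, hCd, gg, hcompat, hdisj⟩ := h3 X.bigA (X.bigF hag)
    (fun p => X.bigA_mem hag hiso hher hBb hC p) (X.bigF_refl hag)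
    (fun p q r hpq hqr => X.bigF_comp hag p q r hpq hqr)
    (fun p q r hpr hqr => X.bigF_disj hag p q r hpr hqr)
  have hcompat' : ∀ (p q : ProperSub 3) (hpq : p.1 ⊆ q.1) (z : X.bigA p),
      gg q (X.bigF hag p q hpq z) = gg p z := fun p q hpq z =>
    DFunLike.congr_fun (hcompat p q hpq) z
  -- evaluations of SS
  have hSS0 : X.SS ps0.1 = X.C0 := by
    unfold OPCtx.SS
    rw [if_pos (by decide), if_neg (by decide), if_neg (by decide), if_neg (by decide)]
    simp
  have hSS01 : X.SS ps01.1 = X.C0 ∪ {X.c} := by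
    unfold OPCtx.SS
    rw [if_pos (by decide), if_pos (by decide), if_neg (by decide), if_neg (by decide)]
    simp
  -- basic membership facts
  have hmem02 : ∀ x : X.C, Sum.inl x ∈ X.SZ ps02 := fun x => by
    rw [X.SZ_neg (by decide)]
    exact ⟨x, by rw [X.SS_univ (by decide) (by decide)]; trivial, rfl⟩
  have hmem12 : ∀ x : X.Bi, Sum.inr (x : X.Bb) ∈ X.SZ ps12 := fun x => by
    rw [X.SZ_pos (by decide)]
    exact ⟨(x : X.Bb), x.2, rfl⟩
  have hmem2 : ∀ a : X.t, Sum.inl (X.gval a) ∈ X.SZ ps2 := fun a => by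
    rw [X.SZ_neg (by decide), X.SS_G (by decide) (by decide) (by decide)]
    exact ⟨X.gval a, ⟨a, rfl⟩, rfl⟩
  have hmem1 : Sum.inl X.c ∈ X.SZ ps1 := by
    rw [X.SZ_neg (by decide), X.SS_c (by decide) (by decide) (by decide)]
    exact ⟨X.c, rfl, rfl⟩
  have hmem01 : ∀ (d : X.C), d ∈ X.C0 ∨ d = X.c → Sum.inl d ∈ X.SZ ps01 := fun d hd => by
    rw [X.SZ_neg (by decide)]
    refine ⟨d, ?_, rfl⟩
    rw [hSS01]
    rcases hd with h | h
    · exact Or.inl h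
    · exact Or.inr h
  -- embeddings into the pieces
  let e02 : (X.C : Type) ↪[L] X.bigA ps02 := mkEmb (fun x => ⟨Sum.inl x, hmem02 x⟩)
    (fun a b h => Sum.inl.inj (congrArg Subtype.val h))
    (fun {n} R x => by
      show RelMap R (Sum.inl ∘ x : Fin n → X.Z) ↔ RelMap R x
      exact X.zrel_inl hag R x)
  let e12 : ((X.Bi : Set X.Bb) : Type) ↪[L] X.bigA ps12 := mkEmb
    (fun x => ⟨Sum.inr (x : X.Bb), hmem12 x⟩)
    (fun a b h => Subtype.ext (Sum.inr.inj (congrArg Subtype.val h)))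
    (fun {n} R x => by
      show RelMap R (Sum.inr ∘ (fun i => ((x i : X.Bb))) : Fin n → X.Z)
        ↔ RelMap R (fun i => ((x i : X.Bb)))
      exact X.zrel_inr hag R _)
  let j0 : X.C ↪[L] Cd := (gg ps02).comp e02
  let h0 : ((X.Bi : Set X.Bb) : Type) ↪[L] Cd := (gg ps12).comp e12
  let w2 : X.t → X.bigA ps2 := fun a => ⟨Sum.inl (X.gval a), hmem2 a⟩
  let wc1 : X.bigA ps1 := ⟨Sum.inl X.c, hmem1⟩
  let w01 : ∀ (d : X.C), d ∈ X.C0 ∨ d = X.c → X.bigA ps01 := fun d hd =>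
    ⟨Sum.inl d, hmem01 d hd⟩
  -- fact A
  have factA : ∀ a : X.t, j0 (X.gval a) = gg ps2 (w2 a) := by
    intro a
    have he : e02 (X.gval a) = X.bigF hag ps2 ps02 (by decide) (w2 a) := by
      refine Subtype.ext ?_
      rw [X.bigF_val]
      show Sum.inl (X.gval a) = X.mvalZ ps2 ps02 (Sum.inl (X.gval a))
      unfold OPCtx.mvalZ
      rw [if_neg (by decide)]
    show gg ps02 (e02 (X.gval a)) = gg ps2 (w2 a)
    rw [he, hcompat' ps2 ps02 (by decide) (w2 a)]
  -- fact B
  have factB : ∀ (x : X.Bi) (hx : (x : X.Bb) ∈ X.t), h0 x = gg ps2 (w2 ⟨(x : X.Bb), hx⟩) := by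
    intro x hx
    have he : e12 x = X.bigF hag ps2 ps12 (by decide) (w2 ⟨(x : X.Bb), hx⟩) := by
      refine Subtype.ext ?_
      rw [X.bigF_val]
      show Sum.inr (x : X.Bb) = X.mvalZ ps2 ps12 (Sum.inl (X.gval ⟨(x : X.Bb), hx⟩))
      unfold OPCtx.mvalZ
      rw [if_pos (by decide)]
      rw [X.psi_gval _ (by decide)]
    show gg ps12 (e12 x) = _
    rw [he, hcompat' ps2 ps12 (by decide)]
  -- fact C/D : the new point
  have factC : ∀ (x : X.Bi), (x : X.Bb) = X.b0 → h0 x = gg ps01 (w01 X.c (Or.inr rfl)) := by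
    intro x hxv
    have he : e12 x = X.bigF hag ps1 ps12 (by decide) wc1 := by
      refine Subtype.ext ?_
      rw [X.bigF_val]
      show Sum.inr (x : X.Bb) = X.mvalZ ps1 ps12 (Sum.inl X.c)
      unfold OPCtx.mvalZ
      rw [if_pos (by decide)]
      rw [hxv]
      simp [OPCtx.psi, (by decide : (1 : Fin 3) ∈ ps1.1)]
    have he2 : X.bigF hag ps1 ps01 (by decide) wc1 = w01 X.c (Or.inr rfl) := by
      refine Subtype.ext ?_
      rw [X.bigF_val]
      show X.mvalZ ps1 ps01 (Sum.inl X.c) = Sum.inl X.c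
      unfold OPCtx.mvalZ
      rw [if_neg (by decide)]
    show gg ps12 (e12 x) = _
    rw [he, hcompat' ps1 ps12 (by decide), ← he2, hcompat' ps1 ps01 (by decide)]
  -- fact E
  have factE : ∀ (d : X.C) (hd : d ∈ X.C0), j0 d = gg ps01 (w01 d (Or.inl hd)) := by
    intro d hd
    have hm0 : Sum.inl d ∈ X.SZ ps0 := by
      rw [X.SZ_neg (by decide), hSS0]
      exact ⟨d, hd, rfl⟩
    have he : e02 d = X.bigF hag ps0 ps02 (by decide) ⟨Sum.inl d, hm0⟩ := by
      refine Subtype.ext ?_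
      rw [X.bigF_val]
      show Sum.inl d = X.mvalZ ps0 ps02 (Sum.inl d)
      unfold OPCtx.mvalZ
      rw [if_neg (by decide)]
    have he2 : X.bigF hag ps0 ps01 (by decide) ⟨Sum.inl d, hm0⟩ = w01 d (Or.inl hd) := by
      refine Subtype.ext ?_
      rw [X.bigF_val]
      show X.mvalZ ps0 ps01 (Sum.inl d) = Sum.inl d
      unfold OPCtx.mvalZ
      rw [if_neg (by decide)]
    show gg ps02 (e02 d) = _
    rw [he, hcompat' ps0 ps02 (by decide), ← he2, hcompat' ps0 ps01 (by decide)]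
  -- not in the image of C0
  have hnotin : ∀ x : X.Bi, h0 x ∉ ⇑j0 '' X.C0 := by
    rintro x ⟨d, hd, heq⟩
    have h1 : h0 x ∈ Set.range (gg ps12) := ⟨e12 x, rfl⟩
    have h2 : h0 x ∈ Set.range (gg ps02) := ⟨e02 d, heq⟩
    have h3' : h0 x ∈ Set.range (gg (interP ps12 ps02)) := by
      rw [← hdisj ps12 ps02]
      exact ⟨h1, h2⟩
    have hps : interP ps12 ps02 = ps2 := by
      apply Subtype.ext
      decide
    rw [hps] at h3'
    obtain ⟨⟨zz, hzz⟩, hw⟩ := h3'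
    have hzz' := hzz
    rw [X.SZ_neg (by decide), X.SS_G (by decide) (by decide) (by decide)] at hzz'
    obtain ⟨yy, ⟨a, rfl⟩, hyv⟩ := hzz'
    have hw' : gg ps2 (w2 a) = h0 x := by
      rw [← hw]
      congr 1
      exact Subtype.ext hyv
    have hda : d = X.gval a := j0.injective (by rw [heq, ← hw', ← factA a])
    exact X.gval_not_mem a (hda ▸ hd)
  -- the qf-class membership
  have hqf : ∀ x : X.Bi, h0 x ∈ qfClassSet L (⇑j0 '' X.C0) (j0 X.c) := by
    intro x
    refine ⟨hnotin x, ?_⟩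
    intro m R y y' hy
    rcases Set.mem_insert_iff.mp x.2 with hxb | hxt
    · -- the new point b0
      have hx0 : h0 x = gg ps01 (w01 X.c (Or.inr rfl)) := factC x hxb
      have hch : ∀ i, ∃ yi : X.C, ∃ hm : yi ∈ X.C0 ∨ yi = X.c,
          y i = j0 yi ∧ y' i = gg ps01 (w01 yi hm) := by
        intro i
        rcases hy i with ⟨h1, h2⟩ | ⟨h1, h2⟩
        · exact ⟨X.c, Or.inr rfl, h1, h2.trans hx0⟩
        · obtain ⟨d, hd, hdv⟩ := h1
          exact ⟨d, Or.inl hd, hdv.symm, by rw [h2, ← hdv, factE d hd]⟩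
      choose yc hm hy1 hy2 using hch
      rw [show y = ⇑j0 ∘ yc from funext hy1, j0.map_rel,
        show y' = ⇑(gg ps01) ∘ (fun i => w01 (yc i) (hm i)) from funext hy2,
        (gg ps01).map_rel]
      have : RelMap R (fun i => w01 (yc i) (hm i)) ↔ RelMap R yc := by
        show RelMap R (Sum.inl ∘ yc : Fin m → X.Z) ↔ RelMap R yc
        exact X.zrel_inl hag R yc
      rw [this]
    · -- a point of t
      set a : X.t := (⟨(x : X.Bb), hxt⟩ : X.t) with ha
      have hx0 : h0 x = j0 (X.gval a) := by
        rw [factB x hxt, ← factA ⟨(x : X.Bb), hxt⟩]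
      have hch : ∀ i, ∃ yi : X.C, y i = j0 yi ∧
          ((yi = X.c ∧ y' i = j0 (X.gval a)) ∨ (yi ∈ X.C0 ∧ y' i = y i)) := by
        intro i
        rcases hy i with ⟨h1, h2⟩ | ⟨h1, h2⟩
        · exact ⟨X.c, h1, Or.inl ⟨rfl, h2.trans hx0⟩⟩
        · obtain ⟨d, hd, hdv⟩ := h1
          exact ⟨d, hdv.symm, Or.inr ⟨hd, h2⟩⟩
      choose yc hy1 hy2 using hch
      have hch' : ∀ i, ∃ yi' : X.C, y' i = j0 yi' ∧
          ((yc i = X.c ∧ yi' = X.gval a) ∨ (yc i ∈ X.C0 ∧ yi' = yc i)) := by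
        intro i
        rcases hy2 i with ⟨h1, h2⟩ | ⟨h1, h2⟩
        · exact ⟨X.gval a, h2, Or.inl ⟨h1, rfl⟩⟩
        · exact ⟨yc i, h2.trans (hy1 i), Or.inr ⟨h1, rfl⟩⟩
      choose yc' hy1' hy2' using hch'
      rw [show y = ⇑j0 ∘ yc from funext hy1, show y' = ⇑j0 ∘ yc' from funext hy1',
        j0.map_rel, j0.map_rel]
      exact (X.gval_qf a).2 R yc yc' hy2'
  -- assemble
  refine ⟨Cd, hCd, j0, mkEmb (fun x => ⟨h0 x, hqf x⟩)
    (fun a b h => h0.injective (congrArg Subtype.val h))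
    (fun {n} R x => by
      show RelMap R (⇑h0 ∘ x) ↔ RelMap R x
      exact h0.map_rel R x), ?_⟩
  intro x hx
  show h0 x = j0 (X.gval ⟨(x : X.Bb), hx⟩)
  rw [factB x hx, ← factA]

end OnePointSec5

section Induction

variable {L : FirstOrder.Language.{u, v}} [L.IsRelational]

theorem auxInd {K : StructClass L} (hfin : AllFinite K) (hiso : IsoClosed K)
    (hsing : UniqueSingleton K) (hher : HereditaryC K) (h3 : DisjointNAmalg K 3) :
    ∀ (n : ℕ) (B' : Bundled.{0} L.Structure), B' ∈ K → ∀ (s t : Set B'), s ⊆ t →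
    ∀ (C : Bundled.{0} L.Structure), C ∈ K → ∀ (C0 : Set C) (c : C), c ∉ C0 →
    ∀ (g : ((s : Set B') : Type) ↪[L] ((qfClassSet L C0 c : Set C) : Type)),
    (t \ s).ncard ≤ n →
    ∃ D ∈ K, ∃ j : C ↪[L] D,
      ∃ h : ((t : Set B') : Type) ↪[L] ((qfClassSet L (⇑j '' C0) (j c) : Set D) : Type),
      ∀ (x : t) (hx : (x : B') ∈ s),
        ((h x : qfClassSet L (⇑j '' C0) (j c)) : D) = j (g ⟨(x : B'), hx⟩) := by
  intro n
  induction n with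
  | zero =>
    intro B' hB s t hst C hC C0 c hc g hcard
    haveI : Finite B' := hfin B' hB
    have hts : t = s := by
      have h0 : (t \ s).ncard = 0 := Nat.le_zero.mp hcard
      have hempty : t \ s = ∅ := (Set.ncard_eq_zero (Set.toFinite _)).mp h0
      exact Set.Subset.antisymm (Set.diff_eq_empty.mp hempty) hst
    subst hts
    have hset : qfClassSet L (⇑(Embedding.refl L (C : Type)) '' C0)
        ((Embedding.refl L (C : Type)) c) = qfClassSet L C0 c := by
      have h1 : ⇑(Embedding.refl L (C : Type)) '' C0 = C0 := by
        ext z; simp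
      have h2 : (Embedding.refl L (C : Type)) c = c := rfl
      rw [h1, h2]
    refine ⟨C, hC, Embedding.refl L C, mkEmb
      (fun x => ⟨((g x : qfClassSet L C0 c) : C), hset.symm ▸ (g x).2⟩)
      (fun a b hab => by
        apply g.injective
        apply Subtype.ext
        have h2 := congrArg Subtype.val hab
        exact h2)
      (fun {m} R x => by
        show RelMap R (fun i => ((g (x i) : qfClassSet L C0 c) : C)) ↔ RelMap R x
        exact g.map_rel R x), fun x hx => rfl⟩
  | succ n ih =>
    intro B' hB s t hst C hC C0 c hc g hcard
    haveI : Finite B' := hfin B' hB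
    by_cases hts : t ⊆ s
    · have h0 : (t \ s).ncard ≤ n := by
        rw [Set.diff_eq_empty.mpr hts]
        simp
      exact ih B' hB s t hst C hC C0 c hc g h0
    · obtain ⟨b0, hb0t, hb0s⟩ := Set.not_subset.mp hts
      have hst' : s ⊆ t \ {b0} := fun z hz =>
        ⟨hst hz, fun he => hb0s (by rwa [Set.mem_singleton_iff.mp he] at hz)⟩
      have hcard' : ((t \ {b0}) \ s).ncard ≤ n := by
        have h1 : (t \ {b0}) \ s = (t \ s) \ {b0} := Set.diff_diff_comm
        have h2 : b0 ∈ t \ s := ⟨hb0t, hb0s⟩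
        have h3' : ((t \ s) \ {b0}).ncard + 1 = (t \ s).ncard :=
          Set.ncard_diff_singleton_add_one h2 (Set.toFinite _)
        rw [h1]
        omega
      obtain ⟨D', hD', j', h', hprop'⟩ := ih B' hB s (t \ {b0}) hst' C hC C0 c hc g hcard'
      have hj'c : j' c ∉ ⇑j' '' C0 := by
        rintro ⟨d, hd, hdc⟩
        exact hc (j'.injective hdc ▸ hd)
      let X : OPCtx L := OPCtx.mk B' D' (t \ {b0}) b0 (⇑j' '' C0) (j' c)
        (fun h => h.2 rfl) hj'c h' 
      obtain ⟨D, hD, j'', h'', hprop''⟩ := onePoint hiso hsing hher h3 X hB hD'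
      have hBit : X.Bi = t := by
        show insert b0 (t \ {b0}) = t
        rw [Set.insert_diff_singleton, Set.insert_eq_self.mpr hb0t]
      refine ⟨D, hD, j''.comp j', ?_⟩
      have hsets : ⇑(j''.comp j') '' C0 = ⇑j'' '' (⇑j' '' C0) := by
        rw [Set.image_image]
        rfl
      rw [hsets, ← hBit]
      refine ⟨h'', ?_⟩
      intro x hx
      have hxt' : (x : B') ∈ X.t := hst' hx
      have step1 := hprop'' x hxt'
      have step2 := hprop' ⟨(x : B'), hxt'⟩ hx
      show ((h'' x : qfClassSet L (⇑j'' '' (⇑j' '' C0)) (j'' (j' c))) : D)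
        = j'' (j' (g ⟨(x : B'), hx⟩))
      rw [step1]
      show j'' ((h' ⟨(x : B'), hxt'⟩ : qfClassSet L (⇑j' '' C0) (j' c)) : D')
        = j'' (j' (g ⟨(x : B'), hx⟩))
      rw [step2]

end Induction

/-- disjoint 3-amalgamation implies definable self-similarity. -/
theorem stmt6 (L : FirstOrder.Language.{u, v}) [L.IsRelational] (K : StructClass L)
    (hfin : AllFinite K) (hiso : IsoClosed K)
    (hsing : UniqueSingleton K) (hher : HereditaryC K)
    (h3 : DisjointNAmalg K 3) :
    DefinablySelfSimilar L K := by
  intro A B C hA hB hC f C0 c hc g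
  haveI : Finite B := hfin B hB
  have hfi : Function.Injective ⇑f := f.injective
  let ef : (A : Type) ≃ ↥(Set.range ⇑f) := Equiv.ofInjective ⇑f hfi
  let g' : ((Set.range ⇑f : Set B) : Type) ↪[L] ((qfClassSet L C0 c : Set C) : Type) :=
    mkEmb (fun x => g (ef.symm x))
      (fun a b hab => by
        have h2 := ef.symm.injective (g.injective hab)
        exact h2)
      (fun {n} R x => by
        have h1 : RelMap R (fun i => ((g (ef.symm (x i)) : qfClassSet L C0 c) : C))
            ↔ RelMap R (fun i => ef.symm (x i)) := g.map_rel R (fun i => ef.symm (x i))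
        have h2 : RelMap R (fun i => ef.symm (x i))
            ↔ RelMap R (⇑f ∘ fun i => ef.symm (x i)) := (f.map_rel R _).symm
        have h3' : (⇑f ∘ fun i => ef.symm (x i)) = fun i => ((x i : B)) := by
          funext i
          exact Equiv.apply_ofInjective_symm hfi (x i)
        show RelMap R (fun i => ((g (ef.symm (x i)) : qfClassSet L C0 c) : C)) ↔ RelMap R x
        rw [h1, h2, h3']
        exact Iff.rfl)
  obtain ⟨D, hD, j, h, hprop⟩ := auxInd hfin hiso hsing hher h3
    ((Set.univ \ Set.range ⇑f).ncard) B hB (Set.range ⇑f) Set.univ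
    (Set.subset_univ _) C hC C0 c hc g' le_rfl
  refine ⟨D, hD, j, mkEmb (fun b => h ⟨b, trivial⟩)
    (fun a b hab => by
      have h2 := congrArg Subtype.val (h.injective hab)
      exact h2)
    (fun {n} R x => by
      have h1 := h.map_rel R (fun i => (⟨x i, trivial⟩ : (Set.univ : Set B)))
      exact h1), ?_⟩
  intro a
  have hmem : (f a : B) ∈ Set.range ⇑f := ⟨a, rfl⟩
  show ((h ⟨f a, trivial⟩ : qfClassSet L (⇑j '' C0) (j c)) : D) = j ((g a : qfClassSet L C0 c) : C)
  rw [hprop ⟨f a, trivial⟩ hmem]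
  congr 1
  show ((g (ef.symm ⟨f a, hmem⟩) : qfClassSet L C0 c) : C) = ((g a : qfClassSet L C0 c) : C)
  congr 2
  exact Equiv.ofInjective_symm_apply hfi a

end ProductsPaper
end
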